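/- arXiv:2310.04138 — 6 statements merged into one kernel-verified Lean document; each statement's English description precedes it below -/
import Mathlib

section
/- Let 0 < 1/n ≪ α, 1/k < 1, let G₁, …, G_m be graphs on a common vertex set V of size n, and let Z ⊆ V be such that every vertex v ∈ V has at least ((k−1)/k + α)|Z| neighbours in Z in every graph G_i. Let J be a graph on at most α|Z|/4 vertices with an edge-colouring χ : E(J) → {1,…,m}. Let I be an independent set in J, let f : I → V be an injection, and suppose V(J) admits an ordering whose initial segment is I such that every vertex has at most k neighbours preceding it. Let U ⊆ V \ f(I) satisfy |U ∩ Z| ≤ α|Z|/4. Then there is an injective map g : V(J) → V extending f, with g(V(J) \ I) ⊆ Z \ U, such that for every edge uv of J, the pair g(u)g(v) is an edge of the graph G_{χ(uv)}. -/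
/-!
The vertices of `J` are embedded one at a time in the degeneracy order. When the next vertex
is placed, its at most `k` earlier neighbours are already embedded, and each of their
neighbourhoods (in the required colour) misses at most `(1/k - α)|Z|` vertices of `Z`; so their
common neighbourhood has at least `α|Z|` vertices in `Z`. At most `α|Z|/4` of these lie in `U`
and fewer than `h ≤ α|Z|/4` are already used, so a free vertex remains.
-/

open Finset

theorem card_filter_not_le_of_mul_le {β : Type*} (Z : Finset β) (p : β → Prop)
    [DecidablePred p] {c : ℝ} (hc : c * #Z ≤ #(Z.filter p)) :
    (#(Z.filter fun z => ¬ p z) : ℝ) ≤ (1 - c) * #Z := by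
  have hsplit : (#(Z.filter p) : ℝ) + #(Z.filter fun z => ¬ p z) = #Z := by
    exact_mod_cast card_filter_add_card_filter_not p
  linarith

theorem card_filter_not_forall_le_sum {β ι : Type*} (Z : Finset β) (S : Finset ι)
    (P : ι → β → Prop) [∀ u, DecidablePred (P u)] :
    #(Z.filter fun z => ¬ ∀ u ∈ S, P u z) ≤ ∑ u ∈ S, #(Z.filter fun z => ¬ P u z) := by
  classical
  calc #(Z.filter fun z => ¬ ∀ u ∈ S, P u z)
      = #(S.biUnion fun u => Z.filter fun z => ¬ P u z) := by
        congr 1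
        ext z
        simp only [mem_filter, mem_biUnion, not_forall, exists_prop]
        tauto
    _ ≤ _ := card_biUnion_le

theorem mul_card_le_card_filter_forall {β ι : Type*} (Z : Finset β) (S : Finset ι)
    (P : ι → β → Prop) [∀ u, DecidablePred (P u)] {k : ℕ} {α : ℝ} (hk : 1 ≤ k)
    (hα : 0 ≤ α) (hα1 : α ≤ 1) (hS : #S ≤ k)
    (hP : ∀ u ∈ S, ((k - 1 : ℝ) / k + α) * #Z ≤ #(Z.filter (P u))) :
    α * #Z ≤ #(Z.filter fun z => ∀ u ∈ S, P u z) := by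
  obtain rfl | ⟨u₀, hu₀⟩ := S.eq_empty_or_nonempty
  · simpa using mul_le_of_le_one_left (Nat.cast_nonneg _) hα1
  have hk' : (1 : ℝ) ≤ k := by exact_mod_cast hk
  have hmiss : ∀ u ∈ S, (#(Z.filter fun z => ¬ P u z) : ℝ) ≤ (1 / k - α) * #Z :=
    fun u hu => by
    convert card_filter_not_le_of_mul_le Z (P u) (hP u hu) using 2
    field_simp
    ring
  have hbad : (#(Z.filter fun z => ¬ ∀ u ∈ S, P u z) : ℝ) ≤ k * ((1 / k - α) * #Z) :=
    calc (#(Z.filter fun z => ¬ ∀ u ∈ S, P u z) : ℝ)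
        ≤ ∑ u ∈ S, (#(Z.filter fun z => ¬ P u z) : ℝ) := by
          exact_mod_cast card_filter_not_forall_le_sum Z S P
      _ ≤ ∑ _u ∈ S, (1 / k - α) * #Z := sum_le_sum hmiss
      _ = #S * ((1 / k - α) * #Z) := by rw [sum_const, nsmul_eq_mul]
      _ ≤ k * ((1 / k - α) * #Z) :=
          mul_le_mul_of_nonneg_right (by exact_mod_cast hS)
            ((Nat.cast_nonneg _).trans (hmiss u₀ hu₀))
  have hsplit : (#(Z.filter fun z => ∀ u ∈ S, P u z) : ℝ)
      + #(Z.filter fun z => ¬ ∀ u ∈ S, P u z) = #Z := by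
    exact_mod_cast card_filter_add_card_filter_not _
  have hexpand : (k : ℝ) * ((1 / k - α) * #Z) = #Z - k * α * #Z := by field_simp
  linarith [mul_nonneg (mul_nonneg (sub_nonneg.2 hk') hα) (Nat.cast_nonneg (α := ℝ) #Z)]

theorem SimpleGraph.ncard_neighborSet_inter_coe {V : Type*} (G : SimpleGraph V)
    [DecidableRel G.Adj] (x : V) (Z : Finset V) :
    (G.neighborSet x ∩ ↑Z).ncard = #(Z.filter (G.Adj x)) := by
  rw [← Set.ncard_coe_finset]
  congr 1
  ext z
  simp [and_comm]

section GreedyEmbedding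

variable {V ι : Type*} {h : ℕ} (G : ι → SimpleGraph V) (J : SimpleGraph (Fin h))
  (χ : Sym2 (Fin h) → ι) (f : Fin h → V) (s : ℕ) (Z U : Finset V)

structure IsPartialCopy (t : ℕ) (g : Fin h → V) : Prop where
  injOn : Set.InjOn g {v | v.val < t}
  eq_of_lt : ∀ v : Fin h, v.val < s → g v = f v
  mem_of_le : ∀ v : Fin h, s ≤ v.val → v.val < t → g v ∈ Z ∧ g v ∉ U
  adj : ∀ u v : Fin h, u.val < t → v.val < t → J.Adj u v → (G (χ s(u, v))).Adj (g u) (g v)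

variable {G J χ f s Z U}

theorem isPartialCopy_initial (hind : ∀ u v : Fin h, u.val < s → v.val < s → ¬ J.Adj u v)
    (hf : Set.InjOn f {v : Fin h | v.val < s}) : IsPartialCopy G J χ f s Z U s f where
  injOn := hf
  eq_of_lt _ _ := rfl
  mem_of_le _ h₁ h₂ := absurd h₂ h₁.not_gt
  adj u v hu hv hadj := absurd hadj (hind u v hu hv)

theorem IsPartialCopy.update {g : Fin h → V} {v : Fin h}
    (hg : IsPartialCopy G J χ f s Z U v.val g) (hsv : s ≤ v.val) {z : V} (hzZ : z ∈ Z)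
    (hzU : z ∉ U) (hzg : ∀ u < v, g u ≠ z)
    (hzadj : ∀ u < v, J.Adj u v → (G (χ s(u, v))).Adj (g u) z) :
    IsPartialCopy G J χ f s Z U (v.val + 1) (Function.update g v z) := by
  have hcases : ∀ {u : Fin h}, u.val < v.val + 1 → u = v ∨ u < v := fun hu =>
    eq_or_lt_of_le (Fin.le_def.2 (Nat.lt_succ_iff.1 hu))
  have hupd : ∀ {u : Fin h}, u < v → Function.update g v z u = g u := fun hu =>
    Function.update_of_ne hu.ne _ _
  refine ⟨fun a ha b hb hab => ?_, fun u hu => ?_, fun u hsu hu => ?_, fun a b ha hb hab => ?_⟩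
  · rcases hcases ha with rfl | ha <;> rcases hcases hb with rfl | hb
    · rfl
    · rw [Function.update_self, hupd hb] at hab
      exact (hzg b hb hab.symm).elim
    · rw [Function.update_self, hupd ha] at hab
      exact (hzg a ha hab).elim
    · rw [hupd ha, hupd hb] at hab
      exact hg.injOn ha hb hab
  · rw [hupd (Fin.lt_def.2 (by omega))]
    exact hg.eq_of_lt u hu
  · rcases hcases hu with rfl | hu
    · simpa using ⟨hzZ, hzU⟩
    · rw [hupd hu]
      exact hg.mem_of_le u hsu hu
  · rcases hcases ha with rfl | ha <;> rcases hcases hb with rfl | hb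
    · exact (hab.ne rfl).elim
    · rw [Function.update_self, hupd hb, Sym2.eq_swap]
      exact (hzadj b hb hab.symm).symm
    · rw [Function.update_self, hupd ha]
      exact hzadj a ha hab
    · rw [hupd ha, hupd hb]
      exact hg.adj a b ha hb hab

theorem exists_extending_vertex [DecidableEq V] {k : ℕ} {α : ℝ} (hk : 1 ≤ k) (hα : 0 ≤ α)
    (hα1 : α ≤ 1)
    (hdeg : ∀ i v, ((k - 1 : ℝ) / k + α) * #Z ≤ ((G i).neighborSet v ∩ ↑Z).ncard)
    (hh : (h : ℝ) ≤ α * #Z / 4) (hU : (#(U ∩ Z) : ℝ) ≤ α * #Z / 4)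
    (v : Fin h) (hv : {u : Fin h | u < v ∧ J.Adj u v}.ncard ≤ k) (g : Fin h → V) :
    ∃ z ∈ Z, z ∉ U ∧ (∀ u < v, g u ≠ z) ∧
      ∀ u < v, J.Adj u v → (G (χ s(u, v))).Adj (g u) z := by
  classical
  set S := univ.filter fun u => u < v ∧ J.Adj u v
  set A := Z.filter fun z => ∀ u ∈ S, (G (χ s(u, v))).Adj (g u) z
  have hS : #S ≤ k := by rwa [← Set.ncard_coe_finset, coe_filter_univ]
  have hA : α * #Z ≤ #A := by
    convert mul_card_le_card_filter_forall Z S _ hk hα hα1 hS fun u _ => by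
      simpa only [SimpleGraph.ncard_neighborSet_inter_coe] using hdeg (χ s(u, v)) (g u)
  set bad := U ∩ Z ∪ (Iio v).image g
  have hbad : (#bad : ℝ) ≤ #(U ∩ Z) + v.val := by
    have := (card_union_le (U ∩ Z) ((Iio v).image g)).trans
      (Nat.add_le_add_left (card_image_le.trans (Fin.card_Iio v).le) _)
    exact_mod_cast this
  have hvh : (v.val : ℝ) + 1 ≤ h := by exact_mod_cast v.isLt
  have hsplit : (#A : ℝ) ≤ #(A \ bad) + #bad := by exact_mod_cast card_le_card_sdiff_add_card
  obtain ⟨z, hz⟩ : (A \ bad).Nonempty := by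
    rw [← card_pos, ← Nat.cast_pos (α := ℝ)]
    linarith [mul_nonneg hα (Nat.cast_nonneg (α := ℝ) #Z)]
  simp only [A, bad, S, mem_sdiff, mem_filter, mem_union, mem_inter, mem_image, mem_Iio, mem_univ,
    true_and, not_or, not_and, not_exists] at hz
  obtain ⟨⟨hzZ, hzadj⟩, hzU, hzg⟩ := hz
  exact ⟨z, hzZ, fun hzU' => hzU hzU' hzZ, hzg, fun u hu hadj => hzadj u ⟨hu, hadj⟩⟩

theorem exists_isPartialCopy [DecidableEq V] {k : ℕ} {α : ℝ} (hk : 1 ≤ k) (hα : 0 ≤ α)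
    (hα1 : α ≤ 1)
    (hdeg : ∀ i v, ((k - 1 : ℝ) / k + α) * #Z ≤ ((G i).neighborSet v ∩ ↑Z).ncard)
    (hh : (h : ℝ) ≤ α * #Z / 4) (hU : (#(U ∩ Z) : ℝ) ≤ α * #Z / 4)
    (hind : ∀ u v : Fin h, u.val < s → v.val < s → ¬ J.Adj u v)
    (hdegen : ∀ v : Fin h, {u : Fin h | u < v ∧ J.Adj u v}.ncard ≤ k)
    (hf : Set.InjOn f {v : Fin h | v.val < s}) {t : ℕ} (hst : s ≤ t) (hth : t ≤ h) :
    ∃ g, IsPartialCopy G J χ f s Z U t g := by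
  induction t, hst using Nat.le_induction with
  | base => exact ⟨f, isPartialCopy_initial hind hf⟩
  | succ t hst ih =>
    obtain ⟨g, hg⟩ := ih (by omega)
    obtain ⟨z, hzZ, hzU, hzg, hzadj⟩ :=
      exists_extending_vertex hk hα hα1 hdeg hh hU ⟨t, by omega⟩ (hdegen _) g
    exact ⟨_, hg.update (v := ⟨t, by omega⟩) hst hzZ hzU hzg hzadj⟩

end GreedyEmbedding

/-- Lemma 5.4 (degenerate greedy embedding): let every vertex have at least
`((k−1)/k + α)|Z|` neighbours in `Z` in each graph of the collection; let `J` be a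
graph on `Fin h` (ordered by index) with `h ≤ α|Z|/4`, whose first `s` vertices form
an independent set `I`, with every vertex having at most `k` earlier neighbours;
let `f` be an injection of `I` into `V` avoiding... Then any exactly `χ`-coloured
copy of `J` extending `f`, avoiding `U`, with the remaining vertices in `Z`, exists. -/
theorem stmt_5 (α : ℝ) (k : ℕ) (hα : 0 < α) (hαk : α < 1) (hk : 1 ≤ k) :
    ∃ n₀ : ℕ, ∀ n : ℕ, n₀ ≤ n →
    ∀ (m : ℕ) (G : Fin m → SimpleGraph (Fin n)) (Z : Finset (Fin n)),
    (∀ (i : Fin m) (v : Fin n),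
        ((k - 1 : ℝ)/k + α) * Z.card ≤ (((G i).neighborSet v) ∩ ↑Z).ncard) →
    ∀ (h : ℕ) (J : SimpleGraph (Fin h)) (χ : Sym2 (Fin h) → Fin m),
    (h : ℝ) ≤ α * Z.card / 4 →
    ∀ s : ℕ, s ≤ h →
    (∀ u v : Fin h, u.val < s → v.val < s → ¬ J.Adj u v) →
    (∀ v : Fin h, ({u : Fin h | u < v ∧ J.Adj u v}).ncard ≤ k) →
    ∀ f : Fin h → Fin n,
    (Set.InjOn f {v : Fin h | v.val < s}) →
    ∀ U : Finset (Fin n),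
    (∀ v : Fin h, v.val < s → f v ∉ U) →
    ((U ∩ Z).card : ℝ) ≤ α * Z.card / 4 →
    ∃ g : Fin h → Fin n, Function.Injective g ∧
      (∀ v : Fin h, v.val < s → g v = f v) ∧
      (∀ v : Fin h, s ≤ v.val → g v ∈ Z ∧ g v ∉ U) ∧
      (∀ u v : Fin h, J.Adj u v → (G (χ s(u, v))).Adj (g u) (g v)) := by
  refine ⟨0, fun n _ m G Z hdeg h J χ hh s hs hind hdegen f hf U _ hU => ?_⟩
  obtain ⟨g, hg⟩ :=
    exists_isPartialCopy (χ := χ) hk hα.le hαk.le hdeg hh hU hind hdegen hf hs le_rfl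
  exact ⟨g, Set.injOn_univ.1 (hg.injOn.mono fun v _ => v.isLt), hg.eq_of_lt,
    fun v hv => hg.mem_of_le v hv v.isLt, fun u v => hg.adj u v u.isLt v.isLt⟩
end

section
/- For n even, there exist two graphs G₁, G₂ on a common vertex set V of size n with minimum degree at least n/2 in each, such that there is no Hamilton cycle e₁e₂…e_n with e₁, e₂ ∈ E(G₁) and e_i ∈ E(G₂) for all 3 ≤ i ≤ n. Concretely: partition V into sets A, B of size n/2, let G₁ be the disjoint union of complete graphs on A and on B together with a perfect matching between A and B, and let G₂ be the complete bipartite graph between A and B. -/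
lemma card_filter_val_lt (n m : ℕ) (h : m ≤ n) :
    (Finset.univ.filter (fun v : Fin n => v.val < m)).card = m := by
  rw [← Fintype.card_subtype]
  have key : Fintype.card {v : Fin n // v.val < m} = Fintype.card (Fin m) :=
    Fintype.card_of_bijective (f := fun x : {v : Fin n // v.val < m} => (⟨x.1.val, x.2⟩ : Fin m))
      ⟨fun a b hab => by
        simp only [Fin.mk.injEq] at hab
        exact Subtype.ext (Fin.ext hab),
       fun y => ⟨⟨⟨y.val, lt_of_lt_of_le y.2 h⟩, y.2⟩, rfl⟩⟩
  rw [key, Fintype.card_fin]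

lemma card_filter_val_not_lt (n m : ℕ) (h : m ≤ n) :
    (Finset.univ.filter (fun v : Fin n => ¬ v.val < m)).card = n - m := by
  have h1 := card_filter_val_lt n m h
  have htot := Finset.card_filter_add_card_filter_not
    (s := (Finset.univ : Finset (Fin n))) (p := fun v : Fin n => v.val < m)
  simp only [Finset.card_univ, Fintype.card_fin] at htot
  omega

lemma ncard_lower (n m : ℕ) (G : SimpleGraph (Fin n)) (v : Fin n) (f : Fin m → Fin n)
    (hinj : Function.Injective f) (hadj : ∀ j, G.Adj v (f j)) :
    (m : ℕ) ≤ (G.neighborSet v).ncard := by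
  have hsub : ↑(Finset.univ.image f) ⊆ G.neighborSet v := by
    intro x hx
    simp only [Finset.coe_image, Finset.coe_univ, Set.image_univ, Set.mem_range] at hx
    obtain ⟨j, rfl⟩ := hx
    exact hadj j
  calc m = (Finset.univ.image f).card := by
        rw [Finset.card_image_of_injective _ hinj, Finset.card_univ, Fintype.card_fin]
    _ = (↑(Finset.univ.image f) : Set (Fin n)).ncard := (Set.ncard_coe_finset _).symm
    _ ≤ (G.neighborSet v).ncard := Set.ncard_le_ncard hsub (Set.toFinite _)

set_option maxHeartbeats 1000000 in
/-- Tightness construction (Section 1.4): for even `n ≥ 4`, partition `Fin n` into the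
first and last `n/2` vertices; `G₁` is two cliques on the parts plus the perfect
matching `v ↦ v + n/2`, and `G₂` is the complete bipartite graph between the parts.
Both graphs have minimum degree at least `n/2`, yet no Hamilton cycle has its first
two edges in `G₁` and the remaining `n−2` edges in `G₂`. A Hamilton cycle is encoded
by a bijective ordering `σ` of the vertices, with `i`-th edge `σ(i)σ(i+1)`
(indices cyclic). -/
theorem stmt_6 (n : ℕ) (hn : Even n) (hn4 : 4 ≤ n)
    (G₁ G₂ : SimpleGraph (Fin n))
    (hG₁ : G₁ = SimpleGraph.fromRel
      (fun u v => (u.val < n/2 ↔ v.val < n/2) ∨ u.val + n/2 = v.val))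
    (hG₂ : G₂ = SimpleGraph.fromRel (fun u v => u.val < n/2 ∧ n/2 ≤ v.val)) :
    (∀ v : Fin n, (n : ℝ) / 2 ≤ (G₁.neighborSet v).ncard) ∧
    (∀ v : Fin n, (n : ℝ) / 2 ≤ (G₂.neighborSet v).ncard) ∧
    ¬ ∃ σ : Equiv.Perm (Fin n), ∀ i : Fin n,
        if i.val < 2 then
          G₁.Adj (σ i) (σ ⟨(i.val + 1) % n, Nat.mod_lt _ i.pos⟩)
        else
          G₂.Adj (σ i) (σ ⟨(i.val + 1) % n, Nat.mod_lt _ i.pos⟩) := by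
  classical
  subst hG₁ hG₂
  have hn2 := Nat.even_iff.mp hn
  set m := n / 2 with hm
  have hmn : m + m = n := by omega
  have hm2 : 2 ≤ m := by omega
  have hreal : (n : ℝ) / 2 = (m : ℕ) := by
    rw [← hmn]; push_cast; ring
  refine ⟨?_, ?_, ?_⟩
  · -- G₁ degrees
    intro v
    rw [hreal, Nat.cast_le]
    have hvn := v.isLt
    by_cases hv : v.val < m
    · apply ncard_lower n m _ v
        (fun j => if j.val = v.val then ⟨v.val + m, by omega⟩ else ⟨j.val, by have := j.isLt; omega⟩)
      · intro a b hab
        have ha := a.isLt; have hb := b.isLt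
        simp only at hab
        split_ifs at hab with h1 h2 h2
        · exact Fin.ext (by omega)
        · have h3' := congrArg Fin.val hab
          have h3 : v.val + m = b.val := h3'
          exact Fin.ext (by omega)
        · have h3' := congrArg Fin.val hab
          have h3 : a.val = v.val + m := h3'
          exact Fin.ext (by omega)
        · have h3' := congrArg Fin.val hab
          have h3 : a.val = b.val := h3'
          exact Fin.ext (by omega)
      · intro j
        have hj := j.isLt
        rw [SimpleGraph.fromRel_adj]
        split_ifs with h
        · refine ⟨fun hc => ?_, Or.inl (Or.inr rfl)⟩
          have h5 := congrArg Fin.val hc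
          have h6 : v.val = v.val + m := h5
          omega
        · refine ⟨fun hc => ?_, Or.inl (Or.inl (show v.val < m ↔ j.val < m by omega))⟩
          have h5 := congrArg Fin.val hc
          have h6 : v.val = j.val := h5
          omega
    · apply ncard_lower n m _ v
        (fun j => if j.val + m = v.val then ⟨v.val - m, by omega⟩
          else ⟨j.val + m, by have := j.isLt; omega⟩)
      · intro a b hab
        have ha := a.isLt; have hb := b.isLt
        simp only at hab
        split_ifs at hab with h1 h2 h2
        · exact Fin.ext (by omega)
        · have h3' := congrArg Fin.val hab
          have h3 : v.val - m = b.val + m := h3'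
          exact Fin.ext (by omega)
        · have h3' := congrArg Fin.val hab
          have h3 : a.val + m = v.val - m := h3'
          exact Fin.ext (by omega)
        · have h3' := congrArg Fin.val hab
          have h3 : a.val + m = b.val + m := h3'
          exact Fin.ext (by omega)
      · intro j
        have hj := j.isLt
        rw [SimpleGraph.fromRel_adj]
        split_ifs with h
        · refine ⟨fun hc => ?_, Or.inr (Or.inr (show (v.val - m) + m = v.val by omega))⟩
          have h5 := congrArg Fin.val hc
          have h6 : v.val = v.val - m := h5
          omega
        · refine ⟨fun hc => ?_, Or.inl (Or.inl (show v.val < m ↔ j.val + m < m by omega))⟩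
          have h5 := congrArg Fin.val hc
          have h6 : v.val = j.val + m := h5
          omega
  · -- G₂ degrees
    intro v
    rw [hreal, Nat.cast_le]
    have hvn := v.isLt
    by_cases hv : v.val < m
    · apply ncard_lower n m _ v (fun j => ⟨j.val + m, by have := j.isLt; omega⟩)
      · intro a b hab
        have h3' := congrArg Fin.val hab
        have h3 : a.val + m = b.val + m := h3'
        exact Fin.ext (by omega)
      · intro j
        have hj := j.isLt
        rw [SimpleGraph.fromRel_adj]
        refine ⟨fun hc => ?_, Or.inl ⟨hv, show m ≤ j.val + m by omega⟩⟩
        have h5 := congrArg Fin.val hc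
        have h6 : v.val = j.val + m := h5
        omega
    · apply ncard_lower n m _ v (fun j => ⟨j.val, by have := j.isLt; omega⟩)
      · intro a b hab
        have h3' := congrArg Fin.val hab
        have h3 : a.val = b.val := h3'
        exact Fin.ext (by omega)
      · intro j
        have hj := j.isLt
        rw [SimpleGraph.fromRel_adj]
        refine ⟨fun hc => ?_, Or.inr ⟨show j.val < m from hj, show m ≤ v.val by omega⟩⟩
        have h5 := congrArg Fin.val hc
        have h6 : v.val = j.val := h5
        omega
  · -- no Hamilton cycle
    rintro ⟨σ, hσ⟩
    have h0n : 0 < n := by omega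
    have h1n : 1 < n := by omega
    have h2n : 2 < n := by omega
    set s : Prop := (σ ⟨2, h2n⟩).val < m with hs
    -- alternation step for G₂ edges
    have step : ∀ k, 2 ≤ k → ∀ hkn : k < n, ∀ hk1 : k + 1 < n,
        ((σ ⟨k, hkn⟩).val < m ↔ ¬ (σ ⟨k + 1, hk1⟩).val < m) := by
      intro k hk2 hkn hk1
      have h := hσ ⟨k, hkn⟩
      have hcond : ¬ ((⟨k, hkn⟩ : Fin n).val < 2) := fun hc => absurd (show k < 2 from hc) (by omega)
      rw [if_neg hcond] at h
      simp only [Fin.val_mk, Nat.mod_eq_of_lt hk1] at h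
      rw [SimpleGraph.fromRel_adj] at h
      obtain ⟨hne, hrel⟩ := h
      have hrel' : ((σ ⟨k, hkn⟩).val < m ∧ m ≤ (σ ⟨k + 1, hk1⟩).val)
          ∨ ((σ ⟨k + 1, hk1⟩).val < m ∧ m ≤ (σ ⟨k, hkn⟩).val) := hrel
      omega
    -- parity of sides
    have key : ∀ k, 2 ≤ k → ∀ hk : k < n,
        ((σ ⟨k, hk⟩).val < m ↔ (k % 2 = 0 ↔ s)) := by
      intro k hk2
      induction k, hk2 using Nat.le_induction with
      | base =>
        intro hk
        have e : (⟨2, hk⟩ : Fin n) = ⟨2, h2n⟩ := rfl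
        rw [e, ← hs]
        simp
      | succ k hk ih =>
        intro hk1
        have hst := step k hk (by omega) hk1
        have ihk := ih (by omega)
        have hpar : ¬((k + 1) % 2 = 0 ↔ k % 2 = 0) := by omega
        tauto
    -- side of σ 0
    have hN1 : n - 1 < n := by omega
    have h0 : ((σ ⟨0, h0n⟩).val < m ↔ s) := by
      have h := hσ ⟨n - 1, hN1⟩
      have hcond : ¬ ((⟨n - 1, hN1⟩ : Fin n).val < 2) :=
        fun hc => absurd (show n - 1 < 2 from hc) (by omega)
      rw [if_neg hcond] at h
      have hidx : (n - 1 + 1) % n = 0 := by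
        have e : n - 1 + 1 = n := by omega
        rw [e, Nat.mod_self]
      simp only [Fin.val_mk, hidx] at h
      rw [SimpleGraph.fromRel_adj] at h
      obtain ⟨hne, hrel⟩ := h
      have hrel' : ((σ ⟨n - 1, hN1⟩).val < m ∧ m ≤ (σ ⟨0, h0n⟩).val)
          ∨ ((σ ⟨0, h0n⟩).val < m ∧ m ≤ (σ ⟨n - 1, hN1⟩).val) := hrel
      have hk := key (n - 1) (by omega) hN1
      have hpar : ¬((n - 1) % 2 = 0) := by omega
      by_cases hss : s
      · simp only [hss, iff_true] at hk ⊢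
        omega
      · simp only [hss, iff_false] at hk ⊢
        omega
    by_cases h1s : ((σ ⟨1, h1n⟩).val < m ↔ s)
    · -- counting contradiction
      have pf : ∀ j : Fin m, 2 * j.val < n := fun j => by have := j.isLt; omega
      set Sf : Finset (Fin n) := Finset.univ.filter (fun v : Fin n => ((v.val < m) ↔ s)) with hSfdef
      have hSf : Sf.card = m := by
        by_cases hss : s
        · have e : Sf = Finset.univ.filter (fun v : Fin n => v.val < m) :=
            Finset.filter_congr (fun v _ => by simp [hss])
          rw [e, card_filter_val_lt n m (by omega)]
        · have e : Sf = Finset.univ.filter (fun v : Fin n => ¬ v.val < m) :=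
            Finset.filter_congr (fun v _ => by simp [hss])
          rw [e, card_filter_val_not_lt n m (by omega)]
          omega
      set E : Finset (Fin n) :=
        (Finset.univ : Finset (Fin m)).image (fun j : Fin m => σ ⟨2 * j.val, pf j⟩) with hE
      have hinjE : Function.Injective (fun j : Fin m => σ ⟨2 * j.val, pf j⟩) := by
        intro a b hab
        have h3 := congrArg Fin.val (σ.injective hab)
        have h4 : 2 * a.val = 2 * b.val := h3
        exact Fin.ext (by omega)
      have hcardE : E.card = m := by
        rw [hE, Finset.card_image_of_injective _ hinjE, Finset.card_univ, Fintype.card_fin]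
      have h1notE : σ ⟨1, h1n⟩ ∉ E := by
        rw [hE]
        simp only [Finset.mem_image, Finset.mem_univ, true_and]
        rintro ⟨j, hj⟩
        have h3 := congrArg Fin.val (σ.injective hj)
        have h4 : 2 * j.val = 1 := h3
        omega
      have hcardF : (insert (σ ⟨1, h1n⟩) E).card = m + 1 := by
        rw [Finset.card_insert_of_notMem h1notE, hcardE]
      have hsub : insert (σ ⟨1, h1n⟩) E ⊆ Sf := by
        intro x hx
        rw [Finset.mem_insert] at hx
        rw [hSfdef, Finset.mem_filter]
        refine ⟨Finset.mem_univ _, ?_⟩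
        rcases hx with rfl | hx
        · exact h1s
        · rw [hE] at hx
          simp only [Finset.mem_image, Finset.mem_univ, true_and] at hx
          obtain ⟨j, rfl⟩ := hx
          by_cases hj0 : j.val = 0
          · have e : (⟨2 * j.val, pf j⟩ : Fin n) = ⟨0, h0n⟩ := Fin.ext (by simp [hj0])
            rw [e]
            exact h0
          · have hk := key (2 * j.val) (by omega) (pf j)
            have hpar : 2 * j.val % 2 = 0 := by omega
            rw [hpar] at hk
            simp only [eq_self_iff_true, true_iff] at hk
            exact hk
      have hle := Finset.card_le_card hsub
      rw [hcardF, hSf] at hle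
      omega
    · -- matching contradiction
      have e0 := hσ ⟨0, h0n⟩
      rw [if_pos (show ((⟨0, h0n⟩ : Fin n).val < 2) from Nat.zero_lt_two)] at e0
      simp only [Fin.val_mk, Nat.mod_eq_of_lt h1n] at e0
      rw [SimpleGraph.fromRel_adj] at e0
      have e1 := hσ ⟨1, h1n⟩
      rw [if_pos (show ((⟨1, h1n⟩ : Fin n).val < 2) from Nat.one_lt_two)] at e1
      simp only [Fin.val_mk, Nat.mod_eq_of_lt h2n] at e1
      rw [SimpleGraph.fromRel_adj] at e1
      obtain ⟨-, hrel0⟩ := e0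
      obtain ⟨-, hrel1⟩ := e1
      have hrel0' : (((σ ⟨0, h0n⟩).val < m ↔ (σ ⟨1, h1n⟩).val < m) ∨ (σ ⟨0, h0n⟩).val + m = (σ ⟨1, h1n⟩).val)
          ∨ (((σ ⟨1, h1n⟩).val < m ↔ (σ ⟨0, h0n⟩).val < m) ∨ (σ ⟨1, h1n⟩).val + m = (σ ⟨0, h0n⟩).val) := hrel0
      have hrel1' : (((σ ⟨1, h1n⟩).val < m ↔ (σ ⟨2, h2n⟩).val < m) ∨ (σ ⟨1, h1n⟩).val + m = (σ ⟨2, h2n⟩).val)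
          ∨ (((σ ⟨2, h2n⟩).val < m ↔ (σ ⟨1, h1n⟩).val < m) ∨ (σ ⟨2, h2n⟩).val + m = (σ ⟨1, h1n⟩).val) := hrel1
      have hne02 : (σ ⟨0, h0n⟩) ≠ (σ ⟨2, h2n⟩) := by
        intro h
        have h3 := congrArg Fin.val (σ.injective h)
        have h4 : (0 : ℕ) = 2 := h3
        omega
      apply hne02
      apply Fin.ext
      have hb0 := (σ ⟨0, h0n⟩).isLt
      have hb1 := (σ ⟨1, h1n⟩).isLt
      have hb2 := (σ ⟨2, h2n⟩).isLt
      rw [hs] at h0 h1s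
      omega
end

section
/- Let ℓ ≥ 1 and define the edge-coloured graph F_ℓ on vertex set A ∪ B ∪ C with A = {a₁,…,a_{ℓ+1}}, B = {b₀,…,b_{3ℓ+1}}, C = {c₁,…,c_ℓ} and edges a_{i+1}b_{3i}, a_{i+1}b_{3i+1} for 0 ≤ i ≤ ℓ; c_{i+1}b_{3i}, c_{i+1}b_{3i+1}, c_{i+1}b_{3i+3}, c_{i+1}b_{3i+4} for 0 ≤ i ≤ ℓ−1; and b_{3i+1}b_{3i+2}, b_{3i+2}b_{3i+3} for 0 ≤ i ≤ ℓ−1, with the colouring described below. Then for every j ∈ {1,…,ℓ+1} there is a path in F_ℓ from b₀ to b_{3ℓ+1} whose vertex set is exactly B ∪ C ∪ {a_j}, and whose i-th edge has colour i for every i ∈ {1,…,4ℓ+2}. -/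
/-!
The path runs along `B` in blocks `b_{3i} x_i b_{3i+1} b_{3i+2} b_{3i+3}` (`0 ≤ i ≤ ℓ`, the last
block stopping at `b_{3ℓ+1}`). To absorb `a_{m+1}`, the detour vertex `x_i` is `c_{i+1}` for
`i < m`, `a_{m+1}` for `i = m` and `c_i` for `i > m`; each of these is joined to both `b_{3i}` and
`b_{3i+1}` by edges of colours `4i+1` and `4i+2`, so the colouring of the path does not depend on
`m`. Injectivity is witnessed by the position of each vertex on the path, a left inverse.
-/

/-- Vertices of the absorbing gadget `F_ℓ`: `gA k` is `a_k` (for `1 ≤ k ≤ ℓ+1`),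
`gB k` is `b_k` (for `0 ≤ k ≤ 3ℓ+1`) and `gC k` is `c_k` (for `1 ≤ k ≤ ℓ`). -/
def gA (k : ℕ) : ℕ ⊕ ℕ ⊕ ℕ := Sum.inl k
def gB (k : ℕ) : ℕ ⊕ ℕ ⊕ ℕ := Sum.inr (Sum.inl k)
def gC (k : ℕ) : ℕ ⊕ ℕ ⊕ ℕ := Sum.inr (Sum.inr k)

/-- The coloured (directed) edges of the gadget `F_ℓ`: `gadgetEdgeAux ℓ c u v` means
`uv` is an edge of `F_ℓ` of colour `c` (colours range over `1,…,4ℓ+2`). -/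
def gadgetEdgeAux (ℓ c : ℕ) (u v : ℕ ⊕ ℕ ⊕ ℕ) : Prop :=
  (u = gA 1 ∧ v = gB 0 ∧ c = 1) ∨ (u = gB 0 ∧ v = gC 1 ∧ c = 1) ∨
  (u = gA 1 ∧ v = gB 1 ∧ c = 2) ∨ (u = gB 1 ∧ v = gC 1 ∧ c = 2) ∨
  (u = gA (ℓ+1) ∧ v = gB (3*ℓ) ∧ c = 4*ℓ+1) ∨ (u = gB (3*ℓ) ∧ v = gC ℓ ∧ c = 4*ℓ+1) ∨
  (u = gA (ℓ+1) ∧ v = gB (3*ℓ+1) ∧ c = 4*ℓ+2) ∨ (u = gB (3*ℓ+1) ∧ v = gC ℓ ∧ c = 4*ℓ+2) ∨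
  (∃ i, 1 ≤ i ∧ i ≤ ℓ - 1 ∧
    ((u = gA (i+1) ∧ v = gB (3*i) ∧ c = 4*i+1) ∨
     (u = gB (3*i) ∧ v = gC i ∧ c = 4*i+1) ∨
     (u = gB (3*i) ∧ v = gC (i+1) ∧ c = 4*i+1) ∨
     (u = gA (i+1) ∧ v = gB (3*i+1) ∧ c = 4*i+2) ∨
     (u = gB (3*i+1) ∧ v = gC i ∧ c = 4*i+2) ∨
     (u = gB (3*i+1) ∧ v = gC (i+1) ∧ c = 4*i+2))) ∨
  (∃ i j, i ≤ ℓ - 1 ∧ (j = 1 ∨ j = 2) ∧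
    u = gB (3*i+j) ∧ v = gB (3*i+j+1) ∧ c = 4*i+j+2)

/-- Symmetrised coloured edge relation of `F_ℓ`. -/
def gadgetEdge (ℓ c : ℕ) (u v : ℕ ⊕ ℕ ⊕ ℕ) : Prop :=
  gadgetEdgeAux ℓ c u v ∨ gadgetEdgeAux ℓ c v u

lemma gadgetEdge_comm {ℓ c : ℕ} {u v : ℕ ⊕ ℕ ⊕ ℕ} : gadgetEdge ℓ c u v ↔ gadgetEdge ℓ c v u :=
  or_comm

section Edges

variable {ℓ q t : ℕ}

lemma gadgetEdge_gB_gA (hq : q ≤ ℓ) (ht : t ≤ 1) :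
    gadgetEdge ℓ (4*q+t+1) (gB (3*q+t)) (gA (q+1)) := by
  right
  unfold gadgetEdgeAux
  obtain rfl | rfl : t = 0 ∨ t = 1 := by omega
  all_goals
    rcases Nat.eq_zero_or_pos q with rfl | hq0
    · simp
    rcases hq.eq_or_lt with rfl | hqℓ
    · simp
    -- an interior block `1 ≤ q < ℓ`: the `∃ i` clause of `gadgetEdgeAux` with `i = q`
    · refine Or.inr <| Or.inr <| Or.inr <| Or.inr <| Or.inr <| Or.inr <| Or.inr <| Or.inr <|
        Or.inl ⟨q, hq0, by omega, by simp⟩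

lemma gadgetEdge_gB_gC_succ (hq : q < ℓ) (ht : t ≤ 1) :
    gadgetEdge ℓ (4*q+t+1) (gB (3*q+t)) (gC (q+1)) := by
  left
  unfold gadgetEdgeAux
  obtain rfl | rfl : t = 0 ∨ t = 1 := by omega
  all_goals
    rcases Nat.eq_zero_or_pos q with rfl | hq0
    · simp
    · refine Or.inr <| Or.inr <| Or.inr <| Or.inr <| Or.inr <| Or.inr <| Or.inr <| Or.inr <|
        Or.inl ⟨q, hq0, by omega, by simp⟩

lemma gadgetEdge_gB_gC_self (hq0 : 1 ≤ q) (hq : q ≤ ℓ) (ht : t ≤ 1) :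
    gadgetEdge ℓ (4*q+t+1) (gB (3*q+t)) (gC q) := by
  left
  unfold gadgetEdgeAux
  obtain rfl | rfl : t = 0 ∨ t = 1 := by omega
  all_goals
    rcases hq.eq_or_lt with rfl | hqℓ
    · simp
    · refine Or.inr <| Or.inr <| Or.inr <| Or.inr <| Or.inr <| Or.inr <| Or.inr <| Or.inr <|
        Or.inl ⟨q, hq0, by omega, by simp⟩

lemma gadgetEdge_gB_gB (hq : q < ℓ) (ht : t = 1 ∨ t = 2) :
    gadgetEdge ℓ (4*q+t+2) (gB (3*q+t)) (gB (3*q+t+1)) :=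
  .inl <| .inr <| .inr <| .inr <| .inr <| .inr <| .inr <| .inr <| .inr <| .inr
    ⟨q, t, by omega, ht, rfl, rfl, rfl⟩

end Edges

/-- The vertex visited between `b_{3i}` and `b_{3i+1}` by the path absorbing `a_{m+1}`. -/
def absorbingMid (m i : ℕ) : ℕ ⊕ ℕ ⊕ ℕ :=
  if i < m then gC (i+1) else if i = m then gA (m+1) else gC i

def absorbingPath (m k : ℕ) : ℕ ⊕ ℕ ⊕ ℕ :=
  match k % 4 with
  | 0 => gB (3 * (k / 4))
  | 1 => absorbingMid m (k / 4)
  | 2 => gB (3 * (k / 4) + 1)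
  | _ => gB (3 * (k / 4) + 2)

section AbsorbingPath

variable (m q : ℕ)

lemma absorbingPath_four_mul : absorbingPath m (4*q) = gB (3*q) := by
  rw [absorbingPath, show 4*q % 4 = 0 by omega, show 4*q / 4 = q by omega]
  rfl

lemma absorbingPath_four_mul_add_one : absorbingPath m (4*q+1) = absorbingMid m q := by
  rw [absorbingPath, show (4*q+1) % 4 = 1 by omega, show (4*q+1) / 4 = q by omega]
  rfl

lemma absorbingPath_four_mul_add_two : absorbingPath m (4*q+2) = gB (3*q+1) := by
  rw [absorbingPath, show (4*q+2) % 4 = 2 by omega, show (4*q+2) / 4 = q by omega]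
  rfl

lemma absorbingPath_four_mul_add_three : absorbingPath m (4*q+3) = gB (3*q+2) := by
  rw [absorbingPath, show (4*q+3) % 4 = 3 by omega, show (4*q+3) / 4 = q by omega]
  rfl

end AbsorbingPath

def absorbingIndex (m : ℕ) : ℕ ⊕ ℕ ⊕ ℕ → ℕ
  | .inl _ => 4*m + 1
  | .inr (.inl n) => if n % 3 = 0 then n + n / 3 else n + n / 3 + 1
  | .inr (.inr n) => if n ≤ m then 4*n - 3 else 4*n + 1

lemma absorbingIndex_absorbingPath (m k : ℕ) : absorbingIndex m (absorbingPath m k) = k := by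
  obtain ⟨q, rfl | rfl | rfl | rfl⟩ : ∃ q, k = 4*q ∨ k = 4*q+1 ∨ k = 4*q+2 ∨ k = 4*q+3 :=
    ⟨k / 4, by omega⟩
  · rw [absorbingPath_four_mul, gB, absorbingIndex]; split_ifs <;> omega
  · rw [absorbingPath_four_mul_add_one, absorbingMid]
    split_ifs <;> simp only [gA, gC, absorbingIndex] <;> (try split_ifs) <;> omega
  · rw [absorbingPath_four_mul_add_two, gB, absorbingIndex]; split_ifs <;> omega
  · rw [absorbingPath_four_mul_add_three, gB, absorbingIndex]; split_ifs <;> omega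

lemma absorbingPath_injective (m : ℕ) : Function.Injective (absorbingPath m) :=
  Function.LeftInverse.injective (absorbingIndex_absorbingPath m)

def absorbedVertices (ℓ j : ℕ) : Set (ℕ ⊕ ℕ ⊕ ℕ) :=
  {x | (∃ k ≤ 3*ℓ + 1, x = gB k) ∨ (∃ k, 1 ≤ k ∧ k ≤ ℓ ∧ x = gC k) ∨ x = gA j}

section Gadget

variable {ℓ m : ℕ}

lemma gadgetEdge_gB_absorbingMid (hm : m ≤ ℓ) {q t : ℕ} (hq : q ≤ ℓ) (ht : t ≤ 1) :
    gadgetEdge ℓ (4*q+t+1) (gB (3*q+t)) (absorbingMid m q) := by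
  unfold absorbingMid
  split_ifs with hqm hqm'
  · exact gadgetEdge_gB_gC_succ (by omega) ht
  · exact hqm' ▸ gadgetEdge_gB_gA hq ht
  · exact gadgetEdge_gB_gC_self (by omega) hq ht

lemma absorbingPath_edge (hm : m ≤ ℓ) {k : ℕ} (hk : k < 4*ℓ+2) :
    gadgetEdge ℓ (k+1) (absorbingPath m k) (absorbingPath m (k+1)) := by
  obtain ⟨q, rfl | rfl | rfl | rfl⟩ : ∃ q, k = 4*q ∨ k = 4*q+1 ∨ k = 4*q+2 ∨ k = 4*q+3 :=
    ⟨k / 4, by omega⟩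
  · rw [absorbingPath_four_mul, absorbingPath_four_mul_add_one]
    exact gadgetEdge_gB_absorbingMid (t := 0) hm (by omega) zero_le_one
  · rw [absorbingPath_four_mul_add_one, absorbingPath_four_mul_add_two, gadgetEdge_comm]
    exact gadgetEdge_gB_absorbingMid (t := 1) hm (by omega) le_rfl
  · rw [absorbingPath_four_mul_add_two, absorbingPath_four_mul_add_three]
    exact gadgetEdge_gB_gB (t := 1) (by omega) (.inl rfl)
  · rw [absorbingPath_four_mul_add_three, show 4*q+3+1 = 4*(q+1) by omega,
      absorbingPath_four_mul, show 3*(q+1) = 3*q+2+1 by omega]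
    exact gadgetEdge_gB_gB (t := 2) (by omega) (.inr rfl)

lemma absorbingPath_mem_absorbedVertices (hm : m ≤ ℓ) {k : ℕ} (hk : k < 4*ℓ+3) :
    absorbingPath m k ∈ absorbedVertices ℓ (m+1) := by
  obtain ⟨q, rfl | rfl | rfl | rfl⟩ : ∃ q, k = 4*q ∨ k = 4*q+1 ∨ k = 4*q+2 ∨ k = 4*q+3 :=
    ⟨k / 4, by omega⟩
  · exact .inl ⟨3*q, by omega, absorbingPath_four_mul m q⟩
  · rw [absorbingPath_four_mul_add_one, absorbingMid]
    split_ifs with hqm hqm'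
    · exact .inr <| .inl ⟨q+1, by omega, by omega, rfl⟩
    · exact .inr <| .inr rfl
    · exact .inr <| .inl ⟨q, by omega, by omega, rfl⟩
  · exact .inl ⟨3*q+1, by omega, absorbingPath_four_mul_add_two m q⟩
  · exact .inl ⟨3*q+2, by omega, absorbingPath_four_mul_add_three m q⟩

lemma exists_absorbingPath_eq (hm : m ≤ ℓ) {x : ℕ ⊕ ℕ ⊕ ℕ}
    (hx : x ∈ absorbedVertices ℓ (m+1)) : ∃ k < 4*ℓ+3, absorbingPath m k = x := by
  rcases hx with ⟨n, hn, rfl⟩ | ⟨n, hn0, hn, rfl⟩ | rfl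
  · obtain ⟨q, rfl | rfl | rfl⟩ : ∃ q, n = 3*q ∨ n = 3*q+1 ∨ n = 3*q+2 := ⟨n / 3, by omega⟩
    · exact ⟨4*q, by omega, absorbingPath_four_mul m q⟩
    · exact ⟨4*q+2, by omega, absorbingPath_four_mul_add_two m q⟩
    · exact ⟨4*q+3, by omega, absorbingPath_four_mul_add_three m q⟩
  · rcases le_or_gt n m with hnm | hnm
    · refine ⟨4*(n-1)+1, by omega, ?_⟩
      rw [absorbingPath_four_mul_add_one, absorbingMid, if_pos (by omega), Nat.sub_add_cancel hn0]
    · refine ⟨4*n+1, by omega, ?_⟩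
      rw [absorbingPath_four_mul_add_one, absorbingMid, if_neg (by omega), if_neg (by omega)]
  · refine ⟨4*m+1, by omega, ?_⟩
    rw [absorbingPath_four_mul_add_one, absorbingMid, if_neg (lt_irrefl m), if_pos rfl]

lemma absorbingPath_image_Iio (hm : m ≤ ℓ) :
    absorbingPath m '' Set.Iio (4*ℓ+3) = absorbedVertices ℓ (m+1) := by
  ext x
  constructor
  · rintro ⟨k, hk, rfl⟩
    exact absorbingPath_mem_absorbedVertices hm hk
  · intro hx
    obtain ⟨k, hk, rfl⟩ := exists_absorbingPath_eq hm hx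
    exact ⟨k, hk, rfl⟩

end Gadget

theorem stmt_9_general (ℓ : ℕ) (j : ℕ) (hj1 : 1 ≤ j) (hj2 : j ≤ ℓ + 1) :
    ∃ p : Fin (4*ℓ + 3) → ℕ ⊕ ℕ ⊕ ℕ, Function.Injective p ∧
      p 0 = gB 0 ∧ p (Fin.last (4*ℓ + 2)) = gB (3*ℓ + 1) ∧
      Set.range p = {x | (∃ k ≤ 3*ℓ + 1, x = gB k) ∨
        (∃ k, 1 ≤ k ∧ k ≤ ℓ ∧ x = gC k) ∨ x = gA j} ∧
      ∀ i : Fin (4*ℓ + 2), gadgetEdge ℓ (i.val + 1) (p i.castSucc) (p i.succ) := by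
  obtain ⟨m, rfl⟩ : ∃ m, j = m + 1 := ⟨j - 1, by omega⟩
  have hm : m ≤ ℓ := by omega
  refine ⟨absorbingPath m ∘ Fin.val, (absorbingPath_injective m).comp Fin.val_injective,
    absorbingPath_four_mul m 0, absorbingPath_four_mul_add_two m ℓ, ?_,
    fun i => absorbingPath_edge hm i.isLt⟩
  rw [Set.range_comp, Fin.range_val]
  exact absorbingPath_image_Iio hm

/-- Proposition 5.2: for every `ℓ ≥ 1` and every `j ∈ {1,…,ℓ+1}`, the gadget `F_ℓ`
contains a path from `b₀` to `b_{3ℓ+1}` whose vertex set is exactly `B ∪ C ∪ {a_j}`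
and whose `i`-th edge has colour `i`, for every `i ∈ {1,…,4ℓ+2}`. -/
theorem stmt_9 (ℓ : ℕ) (hℓ : 1 ≤ ℓ) (j : ℕ) (hj1 : 1 ≤ j) (hj2 : j ≤ ℓ + 1) :
    ∃ p : Fin (4*ℓ + 3) → ℕ ⊕ ℕ ⊕ ℕ, Function.Injective p ∧
      p 0 = gB 0 ∧ p (Fin.last (4*ℓ + 2)) = gB (3*ℓ + 1) ∧
      Set.range p = {x | (∃ k ≤ 3*ℓ + 1, x = gB k) ∨
        (∃ k, 1 ≤ k ∧ k ≤ ℓ ∧ x = gC k) ∨ x = gA j} ∧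
      ∀ i : Fin (4*ℓ + 2), gadgetEdge ℓ (i.val + 1) (p i.castSucc) (p i.succ) :=
  stmt_9_general ℓ j hj1 hj2
end

section
/- The graph F_ℓ (defined on A ∪ B ∪ C with A = {a₁,…,a_{ℓ+1}}, B = {b₀,…,b_{3ℓ+1}}, C = {c₁,…,c_ℓ} and the edges of the absorbing gadget) has degeneracy at most 2 with respect to an ordering whose initial segment is A; that is, there exists an ordering of V(F_ℓ) beginning with a₁,…,a_{ℓ+1} (in some order) such that every vertex has at most 2 neighbours preceding it in the ordering. -/
/-- The (uncoloured, symmetric) adjacency relation of the gadget `F_ℓ`. -/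
def gadgetAdj (ℓ : ℕ) (u v : ℕ ⊕ ℕ ⊕ ℕ) : Prop :=
  ∃ c, gadgetEdgeAux ℓ c u v ∨ gadgetEdgeAux ℓ c v u

/-- The vertex set of `F_ℓ`: `A ∪ B ∪ C`. -/
def gadgetVerts (ℓ : ℕ) : Set (ℕ ⊕ ℕ ⊕ ℕ) :=
  {x | (∃ k, 1 ≤ k ∧ k ≤ ℓ + 1 ∧ x = gA k) ∨ (∃ k ≤ 3*ℓ + 1, x = gB k) ∨
    (∃ k, 1 ≤ k ∧ k ≤ ℓ ∧ x = gC k)}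

/- The ordering a₁,…,a_{ℓ+1}, b₀, b₁, (c_i, b_{3i}, b_{3i+1})_{1 ≤ i ≤ ℓ}, b₂, b₅, …, b_{3ℓ-1} works
because every vertex has an explicit set of at most two "parents" among the earlier vertices:
none for a vertex of A (an independent set), a_{i+1} and c_i for b_{3i} and b_{3i+1}, b_{3i-3} and
b_{3i-2} for c_i, and the path neighbours b_{3i+1}, b_{3i+3} for b_{3i+2}. Checking the finitely
many edge types against the explicit positions shows that the earlier endpoint of every edge is a
parent of the later one. -/

def gadgetPos (ℓ : ℕ) : ℕ ⊕ ℕ ⊕ ℕ → ℕ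
  | Sum.inl k => k - 1
  | Sum.inr (Sum.inl m) => if m % 3 = 2 then 4*ℓ + 3 + m/3 else ℓ + m + 1
  | Sum.inr (Sum.inr t) => ℓ + 3*t

def gadgetOrder (ℓ i : ℕ) : ℕ ⊕ ℕ ⊕ ℕ :=
  if i ≤ ℓ then gA (i + 1)
  else if i < 4*ℓ + 3 then
    if (i - ℓ) % 3 = 0 then gC ((i - ℓ)/3) else gB (i - ℓ - 1)
  else gB (3*(i - (4*ℓ + 3)) + 2)

def gadgetParents : ℕ ⊕ ℕ ⊕ ℕ → Finset (ℕ ⊕ ℕ ⊕ ℕ)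
  | Sum.inl _ => ∅
  | Sum.inr (Sum.inl m) => if m % 3 = 2 then {gB (m - 1), gB (m + 1)} else {gA (m/3 + 1), gC (m/3)}
  | Sum.inr (Sum.inr t) => {gB (3*t - 3), gB (3*t - 2)}

lemma card_gadgetParents_le_two (v : ℕ ⊕ ℕ ⊕ ℕ) : (gadgetParents v).card ≤ 2 := by
  rcases v with k | m | t
  · simp [gadgetParents]
  · simp only [gadgetParents]; split_ifs <;> exact Finset.card_le_two
  · exact Finset.card_le_two

lemma gadgetOrder_mem_gadgetVerts {ℓ i : ℕ} (hi : i < 5*ℓ + 3) : gadgetOrder ℓ i ∈ gadgetVerts ℓ := by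
  unfold gadgetOrder gadgetVerts
  split_ifs
  · exact Or.inl ⟨i + 1, by omega, by omega, rfl⟩
  · exact Or.inr (Or.inr ⟨(i - ℓ) / 3, by omega, by omega, rfl⟩)
  · exact Or.inr (Or.inl ⟨i - ℓ - 1, by omega, rfl⟩)
  · exact Or.inr (Or.inl ⟨_, by omega, rfl⟩)

lemma gadgetPos_gadgetOrder {ℓ i : ℕ} (hi : i < 5*ℓ + 3) : gadgetPos ℓ (gadgetOrder ℓ i) = i := by
  unfold gadgetOrder
  split_ifs <;> simp only [gadgetPos, gA, gB, gC] <;> (try split_ifs) <;> omega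

lemma gadgetPos_lt {ℓ : ℕ} {v : ℕ ⊕ ℕ ⊕ ℕ} (hv : v ∈ gadgetVerts ℓ) : gadgetPos ℓ v < 5*ℓ + 3 := by
  rcases hv with ⟨k, hk1, hk2, rfl⟩ | ⟨m, hm, rfl⟩ | ⟨t, ht1, ht2, rfl⟩ <;>
    simp only [gadgetPos, gA, gB, gC] <;> (try split_ifs) <;> omega

lemma gadgetOrder_gadgetPos {ℓ : ℕ} {v : ℕ ⊕ ℕ ⊕ ℕ} (hv : v ∈ gadgetVerts ℓ) :
    gadgetOrder ℓ (gadgetPos ℓ v) = v := by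
  rcases hv with ⟨k, hk1, hk2, rfl⟩ | ⟨m, hm, rfl⟩ | ⟨t, ht1, ht2, rfl⟩ <;>
    simp only [gadgetPos, gadgetOrder, gA, gB, gC] <;> split_ifs <;> (try simp_all) <;> omega

lemma mem_gadgetParents_of_edge {ℓ c : ℕ} (hℓ : 1 ≤ ℓ) {u v : ℕ ⊕ ℕ ⊕ ℕ}
    (h : gadgetEdgeAux ℓ c u v) :
    (gadgetPos ℓ u < gadgetPos ℓ v → u ∈ gadgetParents v) ∧
      (gadgetPos ℓ v < gadgetPos ℓ u → v ∈ gadgetParents u) := by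
  unfold gadgetEdgeAux at h
  rcases h with ⟨rfl, rfl, -⟩ | ⟨rfl, rfl, -⟩ | ⟨rfl, rfl, -⟩ | ⟨rfl, rfl, -⟩ | ⟨rfl, rfl, -⟩ |
    ⟨rfl, rfl, -⟩ | ⟨rfl, rfl, -⟩ | ⟨rfl, rfl, -⟩ |
    ⟨i, hi1, hi2, ⟨rfl, rfl, -⟩ | ⟨rfl, rfl, -⟩ | ⟨rfl, rfl, -⟩ | ⟨rfl, rfl, -⟩ | ⟨rfl, rfl, -⟩ |
      ⟨rfl, rfl, -⟩⟩ | ⟨i, j, hi, hj, rfl, rfl, -⟩ <;>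
    simp only [gadgetPos, gadgetParents, gA, gB, gC] <;> split_ifs <;> simp_all <;> omega

lemma mem_gadgetParents_of_adj {ℓ : ℕ} (hℓ : 1 ≤ ℓ) {u v : ℕ ⊕ ℕ ⊕ ℕ} (h : gadgetAdj ℓ u v)
    (hlt : gadgetPos ℓ u < gadgetPos ℓ v) : u ∈ gadgetParents v := by
  obtain ⟨c, h | h⟩ := h
  · exact (mem_gadgetParents_of_edge hℓ h).1 hlt
  · exact (mem_gadgetParents_of_edge hℓ h).2 hlt

lemma ncard_earlier_le_card_of_mem {α : Type*} {n : ℕ} {ord : Fin n → α}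
    (hord : Function.Injective ord) {r : α → α → Prop} (parents : α → Finset α)
    (h : ∀ i j, j < i → r (ord j) (ord i) → ord j ∈ parents (ord i)) (i : Fin n) :
    {j | j < i ∧ r (ord j) (ord i)}.ncard ≤ (parents (ord i)).card := by
  rw [← Set.ncard_coe_finset]
  exact Set.ncard_le_ncard_of_injOn ord (fun j ⟨hji, hr⟩ ↦ h i j hji hr) hord.injOn
    (Finset.finite_toSet _)

/-- The gadget `F_ℓ` has degeneracy at most 2 witnessed by an ordering whose initial
segment is `A = {a₁,…,a_{ℓ+1}}`: there is an enumeration of the `5ℓ+3` vertices of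
`F_ℓ` beginning with the vertices of `A` in which every vertex has at most two
neighbours preceding it. -/
theorem stmt_10 (ℓ : ℕ) (hℓ : 1 ≤ ℓ) :
    ∃ ord : Fin (5*ℓ + 3) → ℕ ⊕ ℕ ⊕ ℕ, Function.Injective ord ∧
      Set.range ord = gadgetVerts ℓ ∧
      (∀ i : Fin (5*ℓ + 3), i.val < ℓ + 1 → ∃ k, 1 ≤ k ∧ k ≤ ℓ + 1 ∧ ord i = gA k) ∧
      (∀ i : Fin (5*ℓ + 3),
        ({j : Fin (5*ℓ + 3) | j < i ∧ gadgetAdj ℓ (ord j) (ord i)}).ncard ≤ 2) := by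
  set ord : Fin (5*ℓ + 3) → ℕ ⊕ ℕ ⊕ ℕ := fun i ↦ gadgetOrder ℓ i
  have hpos (i : Fin (5*ℓ + 3)) : gadgetPos ℓ (ord i) = i := gadgetPos_gadgetOrder i.isLt
  have hinj : Function.Injective ord := fun i j h ↦ Fin.ext (by rw [← hpos i, ← hpos j, h])
  refine ⟨ord, hinj, ?_, fun i hi ↦ ⟨i + 1, by omega, by omega, if_pos (by omega)⟩, fun i ↦ ?_⟩
  · ext v
    refine ⟨?_, fun hv ↦ ⟨⟨_, gadgetPos_lt hv⟩, gadgetOrder_gadgetPos hv⟩⟩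
    rintro ⟨i, rfl⟩
    exact gadgetOrder_mem_gadgetVerts i.isLt
  · refine (ncard_earlier_le_card_of_mem hinj gadgetParents (fun i j hji hadj ↦ ?_) i).trans
      (card_gadgetParents_le_two _)
    exact mem_gadgetParents_of_adj hℓ hadj (by rw [hpos, hpos]; exact hji)
end

section
/- Let 0 < 1/n ≪ 1/ℓ, α ≤ 1 and let G₁, …, G_{4ℓ+2} be graphs on a common vertex set V = {1,…,n}, each with minimum degree at least (1/2 + α)n. Let U ⊆ V with |U| ≤ αn/4. Then for every set L ⊆ V of size ℓ+1 there exist disjoint sets of vertices R ⊆ V \ (U ∪ L) and vertices x, y ∈ R such that for every v ∈ L there is an x,y-path P_v = e₁e₂…e_{4ℓ+2} with vertex set R ∪ {v} and e_i an edge of G_i for every i ∈ {1,…,4ℓ+2}. -/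
/-!
The gadget is a coloured graph on the `ℓ + 1` vertices of `L` and `4ℓ + 2` new vertices, laid out
on the positions `0, …, 4ℓ + 2` of an `x,y`-path in which position `4ℓ` is left empty. One new
vertex `b_j` is assigned to each `L_j`; the path absorbing `L_j` puts `L_j` in the place of `b_j`
and moves `b_j` into the empty position, and the gadget contains every edge that any of these
`ℓ + 1` paths uses, in the colour of its place on the path. In a suitable order every new vertex
has at most two earlier neighbours, and two vertices have at least `2αn` common neighbours in any
two of the `G_i`, so the gadget embeds greedily outside `U ∪ L`.
-/

open Finset

theorem exists_injOn_forall_mem_of_rank {β V : Type*} [Nonempty V] (S : Finset β)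
    (rank : β → ℕ) (A : β → (β → V) → Finset V)
    (hA : ∀ b ∈ S, ∀ f g : β → V, (∀ b', rank b' < rank b → f b' = g b') → A b f = A b g)
    (hcard : ∀ b ∈ S, ∀ f, #S ≤ #(A b f)) :
    ∃ f : β → V, Set.InjOn f S ∧ ∀ b ∈ S, f b ∈ A b f := by
  classical
  suffices ∀ T ⊆ S, ∃ f : β → V, Set.InjOn f T ∧ ∀ b ∈ T, f b ∈ A b f from this S subset_rfl
  intro T
  induction T using Finset.induction_on_max_value rank with
  | empty => exact fun _ => ⟨fun _ => Classical.arbitrary V, by simp, by simp⟩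
  | insert a T haT hmax ih =>
    intro hT
    obtain ⟨f, hinj, hmem⟩ := ih ((subset_insert a T).trans hT)
    obtain ⟨v, hvA, hvT⟩ : ∃ v ∈ A a f, v ∉ T.image f := by
      by_contra! h
      have hAT := card_le_card (show A a f ⊆ T.image f from h)
      have hTS := card_le_card hT
      have := hcard a (hT (mem_insert_self a T)) f
      rw [card_insert_of_notMem haT] at hTS
      have := card_image_le (s := T) (f := f)
      omega
    have heq : Set.EqOn (Function.update f a v) f T := fun b hb =>
      Function.update_of_ne (by rintro rfl; exact haT hb) _ _
    have hA' : ∀ b ∈ insert a T, A b (Function.update f a v) = A b f := fun b hb =>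
      hA b (hT hb) _ _ fun b' hb' => Function.update_of_ne (by
        rintro rfl
        rcases mem_insert.1 hb with rfl | hb
        exacts [lt_irrefl _ hb', (hmax b hb).not_gt hb']) _ _
    refine ⟨Function.update f a v, ?_, fun b hb => ?_⟩
    · rw [coe_insert, Set.injOn_insert (mod_cast haT), heq.image_eq, Function.update_self]
      exact ⟨hinj.congr heq.symm, by simpa using hvT⟩
    · rw [hA' b hb]
      rcases mem_insert.1 hb with rfl | hb
      · simpa using hvA
      · rw [heq hb]
        exact hmem b hb

theorem two_mul_le_ncard_inter_neighborSet {V : Type*} [Fintype V] {G H : SimpleGraph V}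
    {u v : V} {α : ℝ} (hG : (1 / 2 + α) * Fintype.card V ≤ (G.neighborSet u).ncard)
    (hH : (1 / 2 + α) * Fintype.card V ≤ (H.neighborSet v).ncard) :
    2 * α * Fintype.card V ≤ (G.neighborSet u ∩ H.neighborSet v).ncard := by
  have hsum := Set.ncard_inter_add_ncard_union (G.neighborSet u) (H.neighborSet v)
  have hunion := (Set.ncard_le_card (G.neighborSet u ∪ H.neighborSet v)).trans_eq
    Nat.card_eq_fintype_card
  have : (G.neighborSet u).ncard + (H.neighborSet v).ncard ≤
      (G.neighborSet u ∩ H.neighborSet v).ncard + Fintype.card V := by omega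
  have : ((G.neighborSet u).ncard : ℝ) + (H.neighborSet v).ncard ≤
      (G.neighborSet u ∩ H.neighborSet v).ncard + Fintype.card V := by exact_mod_cast this
  linarith

theorem sub_card_le_card_filter_of_adj {V : Type*} [Fintype V] [DecidableEq V]
    {G H : SimpleGraph V} {u v : V} {α : ℝ}
    (hG : (1 / 2 + α) * Fintype.card V ≤ (G.neighborSet u).ncard)
    (hH : (1 / 2 + α) * Fintype.card V ≤ (H.neighborSet v).ncard)
    (X : Finset V) {P : V → Prop} [DecidablePred P] (hP : ∀ x, G.Adj u x → H.Adj v x → P x) :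
    2 * α * Fintype.card V - #X ≤ #{x | x ∉ X ∧ P x} := by
  classical
  set N := G.neighborSet u ∩ H.neighborSet v
  have hsub : N.toFinset \ X ⊆ ({x | x ∉ X ∧ P x} : Finset V) := fun x hx => by
    simp only [mem_sdiff, Set.mem_toFinset, N, Set.mem_inter_iff,
      SimpleGraph.mem_neighborSet] at hx
    exact mem_filter.2 ⟨mem_univ x, hx.2, hP x hx.1.1 hx.1.2⟩
  have hN := two_mul_le_ncard_inter_neighborSet hG hH
  rw [Set.ncard_eq_toFinset_card'] at hN
  have hsdiff : (#N.toFinset : ℝ) ≤ #(N.toFinset \ X) + #X := by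
    exact_mod_cast card_le_card_sdiff_add_card
  have : (#(N.toFinset \ X) : ℝ) ≤ #{x | x ∉ X ∧ P x} := by exact_mod_cast card_le_card hsub
  linarith

namespace AbsorbingGadget

/-- Positions on the path: `x = 0`; the swappable vertex `b_k` sits at `4k + 1` for `k < ℓ` and
`b_ℓ` at `4ℓ - 1`; `4ℓ` is the hole, followed by `4ℓ + 1` and `y = 4ℓ + 2`. `Edge ℓ c r s` says
that the vertex at position `s` must be joined in colour `c` to `r`, where `.inl k` stands for
`L_k` and `.inr p` for the vertex at position `p`, which is always embedded before `s`. -/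
inductive Edge (ℓ : ℕ) : ℕ → ℕ ⊕ ℕ → ℕ → Prop
  | anchor_left {k : ℕ} (hk : k < ℓ) : Edge ℓ (4 * k) (.inl k) (4 * k)
  | anchor_right {k : ℕ} (hk : k < ℓ) : Edge ℓ (4 * k + 1) (.inl k) (4 * k + 2)
  | swappable_left {k : ℕ} (hk : k < ℓ) : Edge ℓ (4 * k) (.inr (4 * k + 1)) (4 * k)
  | swappable_right {k : ℕ} (hk : k + 2 ≤ ℓ) :
      Edge ℓ (4 * k + 1) (.inr (4 * k + 1)) (4 * k + 2)
  | link_left {k : ℕ} (hk : k + 2 ≤ ℓ) : Edge ℓ (4 * k + 2) (.inr (4 * k + 2)) (4 * k + 3)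
  | link_right {k : ℕ} (hk : k + 2 ≤ ℓ) : Edge ℓ (4 * k + 3) (.inr (4 * k + 4)) (4 * k + 3)
  | middle_left : Edge ℓ (4 * ℓ - 3) (.inr (4 * ℓ - 2)) (4 * ℓ - 3)
  | middle_right : Edge ℓ (4 * ℓ - 2) (.inr (4 * ℓ - 2)) (4 * ℓ - 1)
  | anchor_last_left : Edge ℓ (4 * ℓ - 2) (.inl ℓ) (4 * ℓ - 2)
  | anchor_last_right : Edge ℓ (4 * ℓ - 1) (.inl ℓ) (4 * ℓ - 1)
  | hole_left {k : ℕ} (hk : k < ℓ) : Edge ℓ (4 * ℓ - 1) (.inr (4 * ℓ - 1)) (4 * k + 1)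
  | hole_right {k : ℕ} (hk : k + 2 ≤ ℓ) : Edge ℓ (4 * ℓ) (.inr (4 * ℓ + 1)) (4 * k + 1)
  | hole_right_pen : Edge ℓ (4 * ℓ) (.inr (4 * ℓ - 3)) (4 * ℓ + 1)
  | hole_right_last : Edge ℓ (4 * ℓ) (.inr (4 * ℓ - 1)) (4 * ℓ + 1)
  | finish : Edge ℓ (4 * ℓ + 1) (.inr (4 * ℓ + 1)) (4 * ℓ + 2)

inductive Adj (ℓ : ℕ) : ℕ → ℕ ⊕ ℕ → ℕ ⊕ ℕ → Prop
  | fwd {c r s} : Edge ℓ c r s → Adj ℓ c r (.inr s)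
  | bwd {c r s} : Edge ℓ c r s → Adj ℓ c (.inr s) r

def rank (ℓ s : ℕ) : ℕ :=
  if s = 4 * ℓ - 2 then 0 else if s = 4 * ℓ - 1 then 1 else if s = 4 * ℓ - 3 then 2
  else if s = 4 * ℓ + 1 then 3 else if s % 4 = 1 ∨ s = 4 * ℓ + 2 then 4
  else if s % 4 = 3 then 6 else 5

def slots (ℓ : ℕ) : Finset ℕ := (range (4 * ℓ + 3)).erase (4 * ℓ)

variable {ℓ : ℕ}

@[simp] theorem mem_slots {s : ℕ} : s ∈ slots ℓ ↔ s < 4 * ℓ + 3 ∧ s ≠ 4 * ℓ := by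
  simp [slots, and_comm]

theorem card_slots (ℓ : ℕ) : #(slots ℓ) = 4 * ℓ + 2 := by
  simp [slots, card_erase_of_mem]

theorem Edge.mem_slots (hℓ : 1 ≤ ℓ) {c r s} (h : Edge ℓ c r s) : s ∈ slots ℓ := by
  rw [AbsorbingGadget.mem_slots]
  cases h <;> omega

theorem Edge.rank_lt (hℓ : 1 ≤ ℓ) {c p s : ℕ} (h : Edge ℓ c (.inr p) s) :
    rank ℓ p < rank ℓ s := by
  generalize hr : (Sum.inr p : ℕ ⊕ ℕ) = r at h
  cases h <;> simp only [Sum.inr.injEq, reduceCtorEq] at hr <;> subst hr <;>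
    simp (disch := omega) only [rank, if_pos, if_neg, ↓reduceIte, or_true] <;>
    (try split_ifs) <;> omega

theorem Edge.exists_parents (hℓ : 1 ≤ ℓ) (s : ℕ) :
    ∃ c₁ r₁ c₂ r₂, c₁ < 4 * ℓ + 2 ∧ c₂ < 4 * ℓ + 2 ∧
      ∀ c r, Edge ℓ c r s → c = c₁ ∧ r = r₁ ∨ c = c₂ ∧ r = r₂ := by
  obtain ⟨k, hs⟩ : ∃ k, s = 4 * k ∨ s = 4 * k + 1 ∨ s = 4 * k + 2 ∨ s = 4 * k + 3 :=
    ⟨s / 4, by omega⟩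
  rcases (by omega : k + 2 ≤ ℓ ∨ k + 1 = ℓ ∨ ℓ ≤ k) with hk | hk | hk <;>
    rcases hs with hs | hs | hs | hs
  on_goal 1 => refine ⟨4 * k, .inl k, 4 * k, .inr (4 * k + 1), ?_⟩
  on_goal 2 => refine ⟨4 * ℓ - 1, .inr (4 * ℓ - 1), 4 * ℓ, .inr (4 * ℓ + 1), ?_⟩
  on_goal 3 => refine ⟨4 * k + 1, .inl k, 4 * k + 1, .inr (4 * k + 1), ?_⟩
  on_goal 4 => refine ⟨4 * k + 2, .inr (4 * k + 2), 4 * k + 3, .inr (4 * k + 4), ?_⟩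
  on_goal 5 => refine ⟨4 * k, .inl k, 4 * k, .inr (4 * k + 1), ?_⟩
  on_goal 6 => refine ⟨4 * ℓ - 3, .inr (4 * ℓ - 2), 4 * ℓ - 1, .inr (4 * ℓ - 1), ?_⟩
  on_goal 7 => refine ⟨4 * ℓ - 3, .inl (ℓ - 1), 4 * ℓ - 2, .inl ℓ, ?_⟩
  on_goal 8 => refine ⟨4 * ℓ - 2, .inr (4 * ℓ - 2), 4 * ℓ - 1, .inl ℓ, ?_⟩
  on_goal 9 => refine ⟨0, .inl 0, 0, .inl 0, ?_⟩
  on_goal 10 => refine ⟨4 * ℓ, .inr (4 * ℓ - 3), 4 * ℓ, .inr (4 * ℓ - 1), ?_⟩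
  on_goal 11 => refine ⟨4 * ℓ + 1, .inr (4 * ℓ + 1), 4 * ℓ + 1, .inr (4 * ℓ + 1), ?_⟩
  on_goal 12 => refine ⟨0, .inl 0, 0, .inl 0, ?_⟩
  all_goals refine ⟨by omega, by omega, fun c r h => ?_⟩
  all_goals cases h <;> simp only [Sum.inl.injEq, Sum.inr.injEq, reduceCtorEq, and_true,
    true_or, or_true] <;> omega

theorem exists_embedding {V : Type*} [Fintype V] (hℓ : 1 ≤ ℓ) {α : ℝ}
    (G : ℕ → SimpleGraph V)
    (hG : ∀ c < 4 * ℓ + 2, ∀ u, (1 / 2 + α) * Fintype.card V ≤ ((G c).neighborSet u).ncard)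
    (X : Finset V) (hX : (#X : ℝ) + (4 * ℓ + 2) ≤ 2 * α * Fintype.card V) (w : ℕ → V) :
    ∃ f : ℕ → V, Set.InjOn f (slots ℓ) ∧ (∀ s ∈ slots ℓ, f s ∉ X) ∧
      ∀ {c a b}, Adj ℓ c a b → (G c).Adj (Sum.elim w f a) (Sum.elim w f b) := by
  classical
  have : Nonempty V := ⟨w 0⟩
  let A (s : ℕ) (f : ℕ → V) : Finset V :=
    {v | v ∉ X ∧ ∀ c r, Edge ℓ c r s → (G c).Adj (Sum.elim w f r) v}
  obtain ⟨f, hinj, hf⟩ := exists_injOn_forall_mem_of_rank (slots ℓ) (rank ℓ) A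
    (fun s _ f g hfg => by
      refine filter_congr fun v _ => and_congr_right fun _ => forall₂_congr fun c r => ?_
      refine imp_congr_right fun h => ?_
      rcases r with j | p
      · rfl
      · rw [Sum.elim_inr, Sum.elim_inr, hfg p (h.rank_lt hℓ)])
    (fun s _ f => by
      obtain ⟨c₁, r₁, c₂, r₂, hc₁, hc₂, hpar⟩ := Edge.exists_parents hℓ s
      have := sub_card_le_card_filter_of_adj (hG c₁ hc₁ (Sum.elim w f r₁))
        (hG c₂ hc₂ (Sum.elim w f r₂)) X
        (P := fun v => ∀ c r, Edge ℓ c r s → (G c).Adj (Sum.elim w f r) v)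
        fun v h₁ h₂ c r h => by rcases hpar c r h with ⟨rfl, rfl⟩ | ⟨rfl, rfl⟩ <;> assumption
      rw [card_slots]
      exact_mod_cast (show ((4 * ℓ + 2 : ℕ) : ℝ) ≤ #(A s f) by push_cast; linarith))
  have hedge : ∀ {c r s}, Edge ℓ c r s → (G c).Adj (Sum.elim w f r) (f s) := fun h =>
    (mem_filter.1 (hf _ (h.mem_slots hℓ))).2.2 _ _ h
  refine ⟨f, hinj, fun s hs => (mem_filter.1 (hf s hs)).2.1, fun h => ?_⟩
  cases h with
  | fwd h => exact hedge h
  | bwd h => exact (hedge h).symm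

def slot (ℓ j : ℕ) : ℕ := if j < ℓ then 4 * j + 1 else 4 * ℓ - 1

theorem slot_pos (hℓ : 1 ≤ ℓ) (j : ℕ) : 0 < slot ℓ j := by
  unfold slot; split_ifs <;> omega

theorem slot_lt (hℓ : 1 ≤ ℓ) (j : ℕ) : slot ℓ j < 4 * ℓ := by
  unfold slot; split_ifs <;> omega

/-- The `i`-th vertex of the path absorbing `L_j`: `L_j` takes the place of `b_j`, and `b_j`
moves into the hole `4ℓ`. -/
def pathRef (ℓ j i : ℕ) : ℕ ⊕ ℕ :=
  if i = slot ℓ j then .inl j else if i = 4 * ℓ then .inr (slot ℓ j) else .inr i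

theorem pathRef_of_ne {j i : ℕ} (h₁ : i ≠ slot ℓ j) (h₂ : i ≠ 4 * ℓ) :
    pathRef ℓ j i = .inr i := by
  simp [pathRef, h₁, h₂]

theorem pathRef_slot (j : ℕ) : pathRef ℓ j (slot ℓ j) = .inl j := by
  simp [pathRef]

theorem pathRef_hole (hℓ : 1 ≤ ℓ) (j : ℕ) : pathRef ℓ j (4 * ℓ) = .inr (slot ℓ j) := by
  rw [pathRef, if_neg (slot_lt hℓ j).ne', if_pos rfl]

theorem pathRef_zero (hℓ : 1 ≤ ℓ) (j : ℕ) : pathRef ℓ j 0 = .inr 0 :=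
  pathRef_of_ne (slot_pos hℓ j).ne (by omega)

theorem pathRef_last (hℓ : 1 ≤ ℓ) (j : ℕ) : pathRef ℓ j (4 * ℓ + 2) = .inr (4 * ℓ + 2) :=
  pathRef_of_ne (by have := slot_lt hℓ j; omega) (by omega)

theorem pathRef_injective (hℓ : 1 ≤ ℓ) (j : ℕ) : Function.Injective (pathRef ℓ j) := by
  have := slot_lt hℓ j
  intro a b h
  unfold pathRef at h
  split_ifs at h <;> simp_all

theorem range_pathRef (hℓ : 1 ≤ ℓ) (j : ℕ) :
    Set.range (fun i : Fin (4 * ℓ + 3) => pathRef ℓ j i) =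
      insert (.inl j) (.inr '' ↑(slots ℓ)) := by
  have hσ := slot_lt hℓ j
  ext r
  simp only [Set.mem_range, Set.mem_insert_iff, Set.mem_image, mem_coe, mem_slots]
  constructor
  · rintro ⟨i, rfl⟩
    by_cases h₁ : (i : ℕ) = slot ℓ j
    · exact .inl (h₁ ▸ pathRef_slot j)
    by_cases h₂ : (i : ℕ) = 4 * ℓ
    · exact .inr ⟨_, ⟨by omega, by omega⟩, (h₂ ▸ pathRef_hole hℓ j).symm⟩
    · exact .inr ⟨i, ⟨i.2, h₂⟩, (pathRef_of_ne h₁ h₂).symm⟩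
  · rintro (rfl | ⟨s, ⟨hs₁, hs₂⟩, rfl⟩)
    · exact ⟨⟨slot ℓ j, by omega⟩, pathRef_slot j⟩
    by_cases h : s = slot ℓ j
    · exact ⟨⟨4 * ℓ, by omega⟩, by rw [pathRef_hole hℓ, h]⟩
    · exact ⟨⟨s, hs₁⟩, pathRef_of_ne h hs₂⟩

theorem injective_elim_pathRef {V : Type*} (hℓ : 1 ≤ ℓ) (j : ℕ) {w f : ℕ → V}
    (hf : Set.InjOn f (slots ℓ)) (hw : w j ∉ f '' slots ℓ) :
    Function.Injective fun i : Fin (4 * ℓ + 3) => Sum.elim w f (pathRef ℓ j i) := by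
  rw [← Set.injOn_univ]
  refine Set.InjOn.comp (t := Set.range fun i : Fin (4 * ℓ + 3) => pathRef ℓ j i) ?_
    ((pathRef_injective hℓ j).comp Fin.val_injective).injOn (fun i _ => ⟨i, rfl⟩)
  rw [range_pathRef hℓ j, Set.injOn_insert (by simp)]
  refine ⟨Set.InjOn.image_of_comp hf, ?_⟩
  rwa [Set.image_image]

theorem range_elim_pathRef {V : Type*} (hℓ : 1 ≤ ℓ) (j : ℕ) (w f : ℕ → V) :
    Set.range (fun i : Fin (4 * ℓ + 3) => Sum.elim w f (pathRef ℓ j i)) =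
      insert (w j) (f '' slots ℓ) := by
  rw [show (fun i : Fin (4 * ℓ + 3) => Sum.elim w f (pathRef ℓ j i)) =
    Sum.elim w f ∘ fun i : Fin (4 * ℓ + 3) => pathRef ℓ j i from rfl, Set.range_comp,
    range_pathRef hℓ j, Set.image_insert_eq, Set.image_image]
  rfl

theorem adj_inr_succ (hℓ : 1 ≤ ℓ) {i : ℕ} (hi : i < 4 * ℓ + 2) (hi₁ : i ≠ 4 * ℓ - 1)
    (hi₂ : i ≠ 4 * ℓ) : Adj ℓ i (.inr i) (.inr (i + 1)) := by
  obtain ⟨k, hk⟩ : ∃ k, i = 4 * k ∨ i = 4 * k + 1 ∨ i = 4 * k + 2 ∨ i = 4 * k + 3 :=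
    ⟨i / 4, by omega⟩
  rcases (by omega : k + 2 ≤ ℓ ∨ k + 1 = ℓ ∨ ℓ ≤ k) with hkℓ | hkℓ | hkℓ <;>
    rcases hk with rfl | rfl | rfl | rfl
  · exact .bwd (.swappable_left (by omega))
  · exact .fwd (.swappable_right hkℓ)
  · exact .fwd (.link_left hkℓ)
  · exact .bwd (.link_right hkℓ)
  · exact .bwd (.swappable_left (by omega))
  · rw [show 4 * k + 1 = 4 * ℓ - 3 by omega, show 4 * ℓ - 3 + 1 = 4 * ℓ - 2 by omega]
    exact .bwd .middle_left
  · rw [show 4 * k + 2 = 4 * ℓ - 2 by omega, show 4 * ℓ - 2 + 1 = 4 * ℓ - 1 by omega]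
    exact .fwd .middle_right
  · omega
  · omega
  · rw [show k = ℓ by omega]
    exact .fwd .finish
  all_goals omega

theorem adj_pathRef (hℓ : 1 ≤ ℓ) {j : ℕ} (hj : j ≤ ℓ) {i : ℕ} (hi : i < 4 * ℓ + 2) :
    Adj ℓ i (pathRef ℓ j i) (pathRef ℓ j (i + 1)) := by
  rcases hj.lt_or_eq with hj | hj
  · have hσ : slot ℓ j = 4 * j + 1 := if_pos hj
    rcases (by omega : i = 4 * j ∨ i = 4 * j + 1 ∨ i = 4 * ℓ - 1 ∨ i = 4 * ℓ ∨
      (i + 1 ≠ slot ℓ j ∧ i ≠ slot ℓ j ∧ i ≠ 4 * ℓ - 1 ∧ i ≠ 4 * ℓ)) with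
      rfl | rfl | rfl | rfl | ⟨h₁, h₂, h₃, h₄⟩
    · rw [pathRef_of_ne (by omega) (by omega), ← hσ, pathRef_slot]
      exact .bwd (.anchor_left hj)
    · rw [← hσ, pathRef_slot, hσ, pathRef_of_ne (by omega) (by omega)]
      exact .fwd (.anchor_right hj)
    · rw [pathRef_of_ne (by omega) (by omega), show 4 * ℓ - 1 + 1 = 4 * ℓ by omega,
        pathRef_hole hℓ, hσ]
      exact .fwd (.hole_left hj)
    · rw [pathRef_hole hℓ, pathRef_of_ne (by omega) (by omega), hσ]
      rcases (by omega : j + 2 ≤ ℓ ∨ j + 1 = ℓ) with h | h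
      · exact .bwd (.hole_right h)
      · rw [show 4 * j + 1 = 4 * ℓ - 3 by omega]
        exact .fwd .hole_right_pen
    · rw [pathRef_of_ne h₂ h₄, pathRef_of_ne h₁ (by omega)]
      exact adj_inr_succ hℓ hi h₃ h₄
  · subst j
    have hσ : slot ℓ ℓ = 4 * ℓ - 1 := if_neg (lt_irrefl ℓ)
    rcases (by omega : i = 4 * ℓ - 2 ∨ i = 4 * ℓ - 1 ∨ i = 4 * ℓ ∨
      (i + 1 ≠ slot ℓ ℓ ∧ i ≠ slot ℓ ℓ ∧ i ≠ 4 * ℓ)) with rfl | rfl | rfl | ⟨h₁, h₂, h₄⟩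
    · rw [pathRef_of_ne (by omega) (by omega), show 4 * ℓ - 2 + 1 = slot ℓ ℓ by omega,
        pathRef_slot]
      exact .bwd .anchor_last_left
    · rw [← hσ, pathRef_slot, hσ, show 4 * ℓ - 1 + 1 = 4 * ℓ by omega, pathRef_hole hℓ, hσ]
      exact .fwd .anchor_last_right
    · rw [pathRef_hole hℓ, pathRef_of_ne (by omega) (by omega), hσ]
      exact .fwd .hole_right_last
    · rw [pathRef_of_ne h₂ h₄, pathRef_of_ne h₁ (by omega)]
      exact adj_inr_succ hℓ hi (by omega) h₄

end AbsorbingGadget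

open AbsorbingGadget in
theorem exists_absorbing_gadget {V : Type*} [Fintype V] {ℓ : ℕ} (hℓ : 1 ≤ ℓ) {α : ℝ}
    (G : Fin (4 * ℓ + 2) → SimpleGraph V)
    (hG : ∀ i u, (1 / 2 + α) * Fintype.card V ≤ ((G i).neighborSet u).ncard)
    (X L : Finset V) (hLX : L ⊆ X) (hL : #L = ℓ + 1)
    (hX : (#X : ℝ) + (4 * ℓ + 2) ≤ 2 * α * Fintype.card V) :
    ∃ (R : Finset V) (x y : V), Disjoint R X ∧ x ∈ R ∧ y ∈ R ∧ x ≠ y ∧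
      ∀ v ∈ L, ∃ p : Fin (4 * ℓ + 3) → V, Function.Injective p ∧
        p 0 = x ∧ p (Fin.last (4 * ℓ + 2)) = y ∧ Set.range p = ↑R ∪ {v} ∧
        ∀ i : Fin (4 * ℓ + 2), (G i).Adj (p i.castSucc) (p i.succ) := by
  classical
  let Gc (c : ℕ) : SimpleGraph V := if h : c < 4 * ℓ + 2 then G ⟨c, h⟩ else ⊥
  let e := (L.equivFinOfCardEq hL).symm
  let w (j : ℕ) : V := e ⟨j % (ℓ + 1), Nat.mod_lt _ ℓ.succ_pos⟩
  obtain ⟨f, hinj, hfX, hadj⟩ := exists_embedding hℓ Gc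
    (fun c hc u => by simpa only [Gc, dif_pos hc] using hG ⟨c, hc⟩ u) X hX w
  have h0 : 0 ∈ slots ℓ := mem_slots.2 ⟨by omega, by omega⟩
  have hy : 4 * ℓ + 2 ∈ slots ℓ := mem_slots.2 ⟨by omega, by omega⟩
  refine ⟨(slots ℓ).image f, f 0, f (4 * ℓ + 2), disjoint_left.2 fun r hr => ?_,
    mem_image_of_mem f h0, mem_image_of_mem f hy, hinj.ne h0 hy (by omega), fun v hv => ?_⟩
  · obtain ⟨s, hs, rfl⟩ := mem_image.1 hr
    exact hfX s hs
  set j : ℕ := (e.symm ⟨v, hv⟩).val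
  have hwj : w j = v := by simp [w, j, Nat.mod_eq_of_lt (e.symm ⟨v, hv⟩).2]
  have hj : j ≤ ℓ := Nat.le_of_lt_succ (e.symm ⟨v, hv⟩).2
  refine ⟨fun i => Sum.elim w f (pathRef ℓ j i), injective_elim_pathRef hℓ j hinj ?_,
    by simp [pathRef_zero hℓ], by simp [pathRef_last hℓ], ?_, fun i => ?_⟩
  · rintro ⟨s, hs, hsj⟩
    exact hfX s hs (hsj ▸ hwj ▸ hLX hv)
  · rw [range_elim_pathRef hℓ j, coe_image, Set.union_singleton, hwj]
  · simpa [Gc] using hadj (adj_pathRef hℓ hj i.2)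

theorem stmt_11_general (α : ℝ) (ℓ : ℕ) (hα : 0 < α) (hℓ : 1 ≤ ℓ) :
    ∃ n₀ : ℕ, ∀ n : ℕ, n₀ ≤ n →
    ∀ G : Fin (4*ℓ + 2) → SimpleGraph (Fin n),
    (∀ (i : Fin (4*ℓ + 2)) (v : Fin n), (1/2 + α) * n ≤ ((G i).neighborSet v).ncard) →
    ∀ U : Finset (Fin n), (U.card : ℝ) ≤ α * n / 4 →
    ∀ L : Finset (Fin n), L.card = ℓ + 1 →
    ∃ (R : Finset (Fin n)) (x y : Fin n),
      Disjoint R U ∧ Disjoint R L ∧ x ∈ R ∧ y ∈ R ∧ x ≠ y ∧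
      ∀ v ∈ L, ∃ p : Fin (4*ℓ + 3) → Fin n, Function.Injective p ∧
        p 0 = x ∧ p (Fin.last (4*ℓ + 2)) = y ∧
        Set.range p = ↑R ∪ {v} ∧
        ∀ i : Fin (4*ℓ + 2), (G i).Adj (p i.castSucc) (p i.succ) := by
  refine ⟨⌈4 * (ℓ + 1) / α⌉₊, fun n hn G hG U hU L hL => ?_⟩
  have hαn : 4 * (ℓ + 1) ≤ α * n := (div_le_iff₀' hα).1 (Nat.ceil_le.1 hn)
  have hUL : (#(U ∪ L) : ℝ) ≤ #U + (ℓ + 1) := by exact_mod_cast hL ▸ card_union_le U L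
  obtain ⟨R, x, y, hR, hx, hy, hxy, hpaths⟩ := exists_absorbing_gadget hℓ G
    (by simpa using hG) (U ∪ L) L subset_union_right hL
    (by rw [Fintype.card_fin]; linarith)
  exact ⟨R, x, y, disjoint_of_subset_right subset_union_left hR,
    disjoint_of_subset_right subset_union_right hR, hx, hy, hxy, hpaths⟩

/-- Lemma 5.3 (robust existence of absorbing gadgets): for `0 < 1/n ≪ 1/ℓ, α ≤ 1`,
if `G₁,…,G_{4ℓ+2}` are graphs on `{1,…,n}` with minimum degree at least `(1/2+α)n`,
and `U` has size at most `αn/4`, then for every set `L` of size `ℓ+1` there are a set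
`R` disjoint from `U ∪ L` and vertices `x, y ∈ R` such that every `v ∈ L` lies on an
`x,y`-path with vertex set `R ∪ {v}` whose `i`-th edge is in `G_i` for `i = 1,…,4ℓ+2`
(an `L`-absorbing gadget). -/
theorem stmt_11 (α : ℝ) (ℓ : ℕ) (hα : 0 < α) (hα1 : α ≤ 1) (hℓ : 1 ≤ ℓ) :
    ∃ n₀ : ℕ, ∀ n : ℕ, n₀ ≤ n →
    ∀ G : Fin (4*ℓ + 2) → SimpleGraph (Fin n),
    (∀ (i : Fin (4*ℓ + 2)) (v : Fin n), (1/2 + α) * n ≤ ((G i).neighborSet v).ncard) →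
    ∀ U : Finset (Fin n), (U.card : ℝ) ≤ α * n / 4 →
    ∀ L : Finset (Fin n), L.card = ℓ + 1 →
    ∃ (R : Finset (Fin n)) (x y : Fin n),
      Disjoint R U ∧ Disjoint R L ∧ x ∈ R ∧ y ∈ R ∧ x ≠ y ∧
      ∀ v ∈ L, ∃ p : Fin (4*ℓ + 3) → Fin n, Function.Injective p ∧
        p 0 = x ∧ p (Fin.last (4*ℓ + 2)) = y ∧
        Set.range p = ↑R ∪ {v} ∧
        ∀ i : Fin (4*ℓ + 2), (G i).Adj (p i.castSucc) (p i.succ) :=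
  stmt_11_general α ℓ hα hℓ
end

section
/- Let 0 < 1/n ≪ ε, 1/K ≪ α ≤ 1 and let G₁,…,G_n be graphs on a common vertex set V = {1,…,n}, all K-partite with respect to a common balanced partition V₁,…,V_K, such that for every j ∈ {1,…,K−1} and every i ∈ {1,…,n}, every vertex of V_j has at least (1/2 + α)n/K neighbours in V_{j+1} in G_i and every vertex of V_{j+1} has at least (1/2 + α)n/K neighbours in V_j in G_i. Let s ≤ (1−ε)n/K and for each i ∈ {1,…,s} let χ_i : {1,…,K−1} → {1,…,n}. Then there exist pairwise vertex-disjoint paths P₁,…,P_s, each with K vertices and with one vertex in each part V₁,…,V_K in order, such that for every i and every j ∈ {1,…,K−1}, the j-th edge of P_i is an edge of G_{χ_i(j)}. -/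
/-!
Trim every part to the minimum part size `m` and remove the paths one at a time. As long as, in
every colour, every vertex has more than half of each adjacent part as neighbours, bipartite Dirac
gives perfect matchings between consecutive parts, which glue to a path factor. The random choice
of one of its paths is derandomised by the potential `∑ exp (-θ · deg / μ)` over all tracked degrees
(`μ` the current part size): removing a path of the factor on average multiplies the potential by
at most `exp ((θ / (μ - 1)) ^ 2)`, so some path does. The degrees start at `(1/2 + α/2) m`, there
are at most `n² K` of them, and `μ - 1 ≥ g := m - s ≥ ε m / 2` throughout; with `θ ≍ α g² / m`
the potential therefore stays below `exp (-θ/2)`, which keeps every degree above half.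
-/

open Finset Real SimpleGraph Filter

theorem mul_exp_add_one_sub_le_exp {a q : ℝ} (ha0 : 0 ≤ a) (ha1 : a ≤ 1) (hq0 : 0 ≤ q)
    (hq1 : q ≤ 1) : q * exp a + (1 - q) ≤ exp (a * q + a ^ 2) := by
  have hexp : exp a ≤ 1 + a + a ^ 2 := by
    have := abs_exp_sub_one_sub_id_le (abs_le.2 ⟨by linarith, ha1⟩)
    linarith [le_abs_self (exp a - 1 - a)]
  nlinarith [add_one_le_exp (a * q + a ^ 2), sq_nonneg a]

theorem sum_exp_card_inter_erase_le {V : Type*} [DecidableEq V] (A T : Finset V) {θ : ℝ}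
    (hT : 2 ≤ #T) (hθ0 : 0 ≤ θ) (hθ : θ ≤ #T - 1) :
    ∑ w ∈ T, exp (-(θ * #(A ∩ T.erase w) / (#T - 1))) ≤
      #T * exp (-(θ * #(A ∩ T) / #T) + (θ / (#T - 1)) ^ 2) := by
  have hT2 : (2 : ℝ) ≤ #T := by exact_mod_cast hT
  have hAT : (#(A ∩ T) : ℝ) ≤ #T := by exact_mod_cast card_le_card inter_subset_right
  have hT1 : (#T : ℝ) - 1 ≠ 0 := ne_of_gt (by linarith)
  have hterm : ∀ w ∈ T, exp (-(θ * #(A ∩ T.erase w) / (#T - 1))) =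
      exp (-(θ / (#T - 1) * #(A ∩ T))) * (1 + if w ∈ A then exp (θ / (#T - 1)) - 1 else 0) := by
    intro w hw
    rw [inter_erase]
    split_ifs with hwA
    · rw [card_erase_of_mem (mem_inter.2 ⟨hwA, hw⟩),
        Nat.cast_sub (card_pos.2 ⟨w, mem_inter.2 ⟨hwA, hw⟩⟩), add_sub_cancel, ← exp_add]
      congr 1
      ring
    · rw [erase_eq_of_notMem (fun h => hwA (mem_inter.1 h).1), add_zero, mul_one]
      congr 1
      ring
  have hsum : ∑ w ∈ T, exp (-(θ * #(A ∩ T.erase w) / (#T - 1))) =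
      #T * exp (-(θ / (#T - 1) * #(A ∩ T))) *
        (#(A ∩ T) / #T * exp (θ / (#T - 1)) + (1 - #(A ∩ T) / #T)) := by
    rw [sum_congr rfl hterm, ← mul_sum, sum_add_distrib, sum_ite_mem, inter_comm T A]
    simp only [sum_const, nsmul_eq_mul, mul_one]
    field_simp
    ring
  calc ∑ w ∈ T, exp (-(θ * #(A ∩ T.erase w) / (#T - 1)))
      ≤ #T * exp (-(θ / (#T - 1) * #(A ∩ T))) *
          exp (θ / (#T - 1) * (#(A ∩ T) / #T) + (θ / (#T - 1)) ^ 2) := by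
        rw [hsum]
        gcongr
        exact mul_exp_add_one_sub_le_exp (div_nonneg hθ0 (by linarith))
          ((div_le_one (by linarith)).2 hθ) (by positivity)
          (div_le_one_of_le₀ hAT (by positivity))
    _ = #T * exp (-(θ * #(A ∩ T) / #T) + (θ / (#T - 1)) ^ 2) := by
        rw [mul_assoc, ← exp_add]
        congr 2
        field_simp
        ring

theorem exists_sum_exp_card_inter_erase_le {ι κ V : Type*} [DecidableEq V] (I : Finset ι)
    (part : ι → κ) (A : ι → Finset V) (R : κ → Finset V) (S : Finset V) (P : V → κ → V)
    {θ : ℝ} (hP : ∀ ℓ, Set.BijOn (P · ℓ) S (R ℓ)) (hS : 2 ≤ #S) (hθ0 : 0 ≤ θ)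
    (hθ : θ ≤ #S - 1) :
    ∃ u ∈ S, ∑ x ∈ I, exp (-(θ * #(A x ∩ (R (part x)).erase (P u (part x))) / (#S - 1))) ≤
      exp ((θ / (#S - 1)) ^ 2) * ∑ x ∈ I, exp (-(θ * #(A x ∩ R (part x)) / #S)) := by
  have hcard : ∀ ℓ, #(R ℓ) = #S := fun ℓ =>
    (card_nbij _ (hP ℓ).mapsTo (hP ℓ).injOn (hP ℓ).surjOn).symm
  refine exists_le_of_sum_le (card_pos.1 (by omega)) ?_
  rw [sum_comm, sum_const, nsmul_eq_mul, mul_sum, mul_sum]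
  refine sum_le_sum fun x _ => ?_
  have hbij := hP (part x)
  rw [sum_nbij (P · (part x)) (fun u hu => hbij.mapsTo hu) hbij.injOn hbij.surjOn
    (g := fun w => exp (-(θ * #(A x ∩ (R (part x)).erase w) / (#S - 1)))) (fun _ _ => rfl)]
  have := sum_exp_card_inter_erase_le (A x) (R (part x)) (θ := θ) (by rw [hcard]; exact hS) hθ0
    (by rwa [hcard])
  rw [hcard, exp_add] at this
  linarith

theorem card_le_card_biUnion_neighborFinset_inter {V : Type*} [Fintype V] [DecidableEq V]
    (G : SimpleGraph V) [DecidableRel G.Adj] {A B : Finset V} (hAB : #A = #B)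
    (hA : ∀ v ∈ A, #A < 2 * #(G.neighborFinset v ∩ B))
    (hB : ∀ w ∈ B, #B < 2 * #(G.neighborFinset w ∩ A)) (S : Finset A) :
    #S ≤ #(S.biUnion fun a : A => G.neighborFinset a ∩ B) := by
  obtain rfl | ⟨a, ha⟩ := S.eq_empty_or_nonempty
  · simp
  by_cases hS : 2 * #S ≤ #A
  · have := hA a a.2
    have := card_le_card (subset_biUnion_of_mem (fun a : A => G.neighborFinset a ∩ B) ha)
    omega
  -- a vertex of `B` sees more than half of `A`, so it has a neighbour in `S`
  have hBsub : B ⊆ S.biUnion fun a : A => G.neighborFinset a ∩ B := by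
    intro w hw
    obtain ⟨v, hv⟩ := inter_nonempty_of_card_lt_card_add_card inter_subset_right
      (s := A) (t := G.neighborFinset w ∩ A) (u := S.map (Function.Embedding.subtype _))
      (fun v hv => by obtain ⟨a, -, rfl⟩ := mem_map.1 hv; exact a.2)
      (by have := hB w hw; rw [card_map]; omega)
    obtain ⟨hwv, -⟩ := mem_inter.1 (mem_inter.1 hv).1
    obtain ⟨a, haS, rfl⟩ := mem_map.1 (mem_inter.1 hv).2
    exact mem_biUnion.2 ⟨a, haS, mem_inter.2
      ⟨(mem_neighborFinset _ _ _).2 ((mem_neighborFinset _ _ _).1 hwv).symm, hw⟩⟩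
  have := card_le_card hBsub
  have := card_le_univ S
  simp only [Fintype.card_coe] at this
  omega

/-- Bipartite Dirac theorem. -/
theorem exists_bijOn_adj_of_lt_two_mul_card {V : Type*} [Fintype V] [DecidableEq V]
    (G : SimpleGraph V) [DecidableRel G.Adj] {A B : Finset V} (hAB : #A = #B)
    (hA : ∀ v ∈ A, #A < 2 * #(G.neighborFinset v ∩ B))
    (hB : ∀ w ∈ B, #B < 2 * #(G.neighborFinset w ∩ A)) :
    ∃ f : V → V, Set.BijOn f A B ∧ ∀ v ∈ A, G.Adj v (f v) := by
  obtain ⟨f, hf, hfB⟩ := (all_card_le_biUnion_card_iff_exists_injective _).1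
    (card_le_card_biUnion_neighborFinset_inter G hAB hA hB)
  let g : V → V := fun v => if h : v ∈ A then f ⟨v, h⟩ else v
  have hg : ∀ a : A, g a = f a := fun a => dif_pos a.2
  have hmaps : Set.MapsTo g A B := fun v hv => by
    simpa [hg ⟨v, hv⟩] using (mem_inter.1 (hfB ⟨v, hv⟩)).2
  have hinj : Set.InjOn g A := fun v hv w hw h =>
    congrArg Subtype.val (hf (by simpa [hg ⟨v, hv⟩, hg ⟨w, hw⟩] using h))
  refine ⟨g, ⟨hmaps, hinj, surjOn_of_injOn_of_card_le g hmaps hinj hAB.ge⟩, fun v hv => ?_⟩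
  simpa [hg ⟨v, hv⟩] using (mem_inter.1 (hfB ⟨v, hv⟩)).1

theorem exists_pathFactor {C V : Type*} [Fintype V] [DecidableEq V] (G : C → SimpleGraph V)
    [∀ c, DecidableRel (G c).Adj] {k : ℕ} (R : Fin (k + 1) → Finset V) (col : Fin k → C)
    (hcard : ∀ j, #(R j) = #(R 0))
    (hdeg : ∀ c j ℓ, (pathGraph (k + 1)).Adj j ℓ → ∀ v ∈ R j,
      #(R j) < 2 * #((G c).neighborFinset v ∩ R ℓ)) :
    ∃ P : V → Fin (k + 1) → V, (∀ j, Set.BijOn (P · j) (R 0) (R j)) ∧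
      ∀ u ∈ R 0, ∀ j : Fin k, (G (col j)).Adj (P u j.castSucc) (P u j.succ) := by
  have hadj : ∀ j : Fin k, (pathGraph (k + 1)).Adj j.castSucc j.succ := fun j => by
    simp [pathGraph_adj]
  choose f hf using fun j : Fin k => exists_bijOn_adj_of_lt_two_mul_card (G (col j))
    ((hcard _).trans (hcard _).symm) (hdeg _ _ _ (hadj j)) (hdeg _ _ _ (hadj j).symm)
  let P : V → Fin (k + 1) → V := fun u => Fin.induction u fun j x => f j x
  have hPsucc : ∀ u j, P u j.succ = f j (P u j.castSucc) := fun u j => Fin.induction_succ _ _ j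
  have hbij : ∀ j, Set.BijOn (P · j) (R 0) (R j) := by
    intro j
    induction j using Fin.induction with
    | zero => exact Set.bijOn_id _
    | succ j ih =>
      simp only [hPsucc]
      exact (hf j).1.comp ih
  refine ⟨P, hbij, fun u hu j => ?_⟩
  rw [hPsucc]
  exact (hf j).2 _ ((hbij _).mapsTo hu)

/-- Paths through the parts `R 0, …, R k` in order, disjoint within each part. Edges are numbered
from `1`: the edge of `p i` from part `j` to part `j + 1` has colour `χ i (j + 1)`. -/
structure IsColouredPathPacking {C V : Type*} {k s : ℕ} (G : C → SimpleGraph V)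
    (R : Fin (k + 1) → Finset V) (χ : Fin s → ℕ → C) (p : Fin s → Fin (k + 1) → V) : Prop where
  mem : ∀ i j, p i j ∈ R j
  injective : ∀ j, Function.Injective (p · j)
  adj : ∀ i (j : Fin k), (G (χ i (j + 1))).Adj (p i j.castSucc) (p i j.succ)

namespace IsColouredPathPacking

variable {C V : Type*} {k s : ℕ} {G : C → SimpleGraph V} {R : Fin (k + 1) → Finset V}

theorem mono {R' : Fin (k + 1) → Finset V} {χ : Fin s → ℕ → C} {p : Fin s → Fin (k + 1) → V}
    (hp : IsColouredPathPacking G R χ p) (hRR' : ∀ j, R j ⊆ R' j) :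
    IsColouredPathPacking G R' χ p :=
  ⟨fun i j => hRR' j (hp.mem i j), hp.injective, hp.adj⟩

theorem cons [DecidableEq V] {χ : Fin (s + 1) → ℕ → C} {q : Fin (k + 1) → V}
    {p : Fin s → Fin (k + 1) → V} (hqR : ∀ j, q j ∈ R j)
    (hq : ∀ j : Fin k, (G (χ 0 (j + 1))).Adj (q j.castSucc) (q j.succ))
    (hp : IsColouredPathPacking G (fun j => (R j).erase (q j)) (fun i => χ i.succ) p) :
    IsColouredPathPacking G R χ (Fin.cons q p) where
  mem i j := by
    cases i using Fin.cases with
    | zero => exact hqR j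
    | succ i => exact mem_of_mem_erase (hp.mem i j)
  injective j := by
    have : (fun i => (Fin.cons q p : Fin (s + 1) → Fin (k + 1) → V) i j) =
        Fin.cons (q j) (p · j) := by
      funext i
      cases i using Fin.cases <;> rfl
    rw [this, Fin.cons_injective_iff]
    exact ⟨fun ⟨i, hi⟩ => notMem_erase (q j) (R j) (hi ▸ hp.mem i j), hp.injective j⟩
  adj i j := by
    cases i using Fin.cases with
    | zero => exact hq j
    | succ i => exact hp.adj i j

end IsColouredPathPacking

section PathPotential

variable {C V : Type*} [Fintype C] [Fintype V] [DecidableEq V] (G : C → SimpleGraph V)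
  [∀ c, DecidableRel (G c).Adj] {k : ℕ}

open Classical in
/-- The triples `(c, v, ℓ)` whose degree `#(N_{G c}(v) ∩ R ℓ)` has to stay above `#(R ℓ) / 2`. -/
noncomputable def consecutiveTriples (R : Fin (k + 1) → Finset V) : Finset (C × V × Fin (k + 1)) :=
  {x | ∃ j, (pathGraph (k + 1)).Adj j x.2.2 ∧ x.2.1 ∈ R j}

/-- The pessimistic estimator of the random greedy algorithm; `μ` is the current part size. -/
noncomputable def pathPotential (θ μ : ℝ) (R : Fin (k + 1) → Finset V) : ℝ :=
  ∑ x ∈ consecutiveTriples R, exp (-(θ * #((G x.1).neighborFinset x.2.1 ∩ R x.2.2) / μ))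

theorem mem_consecutiveTriples {R : Fin (k + 1) → Finset V} {x : C × V × Fin (k + 1)} :
    x ∈ consecutiveTriples R ↔ ∃ j, (pathGraph (k + 1)).Adj j x.2.2 ∧ x.2.1 ∈ R j := by
  simp [consecutiveTriples]

variable {G}

theorem pathPotential_nonneg (θ μ : ℝ) (R : Fin (k + 1) → Finset V) :
    0 ≤ pathPotential G θ μ R :=
  sum_nonneg fun _ _ => (exp_pos _).le

theorem lt_two_mul_card_of_pathPotential_lt {θ μ : ℝ} {R : Fin (k + 1) → Finset V} (hθ : 0 < θ)
    (hμ : 0 < μ) (hR : pathPotential G θ μ R < exp (-(θ / 2))) {c : C} {v : V} {j ℓ : Fin (k + 1)}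
    (hjℓ : (pathGraph (k + 1)).Adj j ℓ) (hv : v ∈ R j) :
    μ < 2 * #((G c).neighborFinset v ∩ R ℓ) := by
  have hmem : (c, v, ℓ) ∈ consecutiveTriples R := mem_consecutiveTriples.2 ⟨j, hjℓ, hv⟩
  have := (single_le_sum (fun x _ => (exp_pos _).le) hmem).trans_lt hR
  rw [exp_lt_exp, neg_lt_neg_iff, lt_div_iff₀ hμ] at this
  nlinarith

theorem pathPotential_le {θ μ d : ℝ} {R : Fin (k + 1) → Finset V} (hθ : 0 ≤ θ) (hμ : 0 < μ)
    (hdeg : ∀ c v j ℓ, (pathGraph (k + 1)).Adj j ℓ → v ∈ R j →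
      d ≤ #((G c).neighborFinset v ∩ R ℓ)) :
    pathPotential G θ μ R ≤ Fintype.card C * Fintype.card V * (k + 1) * exp (-(θ * d / μ)) := by
  have hcard : (#(consecutiveTriples R : Finset (C × V × Fin (k + 1))) : ℝ) ≤
      Fintype.card C * Fintype.card V * (k + 1) := by
    have := card_le_univ (consecutiveTriples R : Finset (C × V × Fin (k + 1)))
    simp only [Fintype.card_prod, Fintype.card_fin] at this
    exact_mod_cast this.trans_eq (by ring)
  refine (sum_le_card_nsmul _ _ (exp (-(θ * d / μ))) fun x hx => ?_).trans ?_
  · obtain ⟨j, hjℓ, hv⟩ := mem_consecutiveTriples.1 hx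
    gcongr
    exact hdeg _ _ _ _ hjℓ hv
  · rw [nsmul_eq_mul]
    gcongr

theorem exists_path_pathPotential_erase_le {θ : ℝ} {μ : ℕ} {R : Fin (k + 1) → Finset V}
    (col : Fin k → C) (hR : ∀ j, #(R j) = μ) (hμ : 2 ≤ μ) (hθ : 0 < θ) (hθμ : θ ≤ μ - 1)
    (hpot : pathPotential G θ μ R < exp (-(θ / 2))) :
    ∃ q : Fin (k + 1) → V, (∀ j, q j ∈ R j) ∧
      (∀ j : Fin k, (G (col j)).Adj (q j.castSucc) (q j.succ)) ∧
      pathPotential G θ (μ - 1) (fun j => (R j).erase (q j)) ≤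
        exp ((θ / (μ - 1)) ^ 2) * pathPotential G θ μ R := by
  obtain ⟨P, hbij, hadj⟩ := exists_pathFactor G R col (fun j => (hR j).trans (hR 0).symm)
    fun c j ℓ hjℓ v hv => by
      have := lt_two_mul_card_of_pathPotential_lt (c := c) hθ (by positivity) hpot hjℓ hv
      rw [hR]
      exact_mod_cast this
  obtain ⟨u, hu, hle⟩ := exists_sum_exp_card_inter_erase_le (consecutiveTriples R) (·.2.2)
    (fun x => (G x.1).neighborFinset x.2.1) R (R 0) P hbij (by rwa [hR]) hθ.le (by rwa [hR])
  refine ⟨P u, fun j => (hbij j).mapsTo hu, hadj u hu, ?_⟩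
  rw [hR] at hle
  refine le_trans ?_ hle
  refine sum_le_sum_of_subset_of_nonneg (fun x hx => ?_) fun _ _ _ => (exp_pos _).le
  obtain ⟨j, hjℓ, hv⟩ := mem_consecutiveTriples.1 hx
  exact mem_consecutiveTriples.2 ⟨j, hjℓ, mem_of_mem_erase hv⟩

/-- Each removed path costs a factor `exp ((θ / g) ^ 2)` while `g` vertices per part remain, so
the budget `exp (s (θ / g) ^ 2)` keeps every tracked degree above half for `s` steps. -/
theorem exists_paths_of_pathPotential_lt {θ : ℝ} {g : ℕ} (hθ : 0 < θ) (hθg : θ ≤ g) (s : ℕ) :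
    ∀ (μ : ℕ) (R : Fin (k + 1) → Finset V) (χ : Fin s → ℕ → C), (∀ j, #(R j) = μ) →
      s + g ≤ μ → pathPotential G θ μ R * exp (s * (θ / g) ^ 2) < exp (-(θ / 2)) →
      ∃ p, IsColouredPathPacking G R χ p := by
  induction s with
  | zero => exact fun _ _ _ _ _ _ => ⟨finZeroElim, finZeroElim, fun _ i => i.elim0, finZeroElim⟩
  | succ s ih =>
    intro μ R χ hR hsμ hpot
    have hg : (0 : ℝ) < g := hθ.trans_le hθg
    have hgμ : (g : ℝ) ≤ μ - 1 := by
      have : ((s + 1 + g : ℕ) : ℝ) ≤ μ := by exact_mod_cast hsμ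
      push_cast at this
      linarith [(s.cast_nonneg : (0 : ℝ) ≤ s)]
    have hpot' : pathPotential G θ μ R < exp (-(θ / 2)) :=
      (le_mul_of_one_le_right (pathPotential_nonneg θ μ R) (one_le_exp (by positivity))).trans_lt
        hpot
    have hμ : 2 ≤ μ := by have := Nat.cast_pos.1 hg; omega
    obtain ⟨q, hqR, hqadj, hqpot⟩ := exists_path_pathPotential_erase_le (fun j => χ 0 (j + 1))
      hR hμ hθ (hθg.trans hgμ) hpot'
    have hpot'' : pathPotential G θ (μ - 1 : ℕ) (fun j => (R j).erase (q j)) *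
        exp (s * (θ / g) ^ 2) < exp (-(θ / 2)) := by
      rw [Nat.cast_pred (by omega)]
      calc pathPotential G θ (μ - 1) (fun j => (R j).erase (q j)) * exp (s * (θ / g) ^ 2)
          ≤ exp ((θ / g) ^ 2) * pathPotential G θ μ R * exp (s * (θ / g) ^ 2) := by
            gcongr
            refine hqpot.trans (mul_le_mul_of_nonneg_right ?_ (pathPotential_nonneg θ μ R))
            gcongr
            exact div_nonneg hθ.le (hg.le.trans hgμ)
        _ = pathPotential G θ μ R * exp ((s + 1 : ℕ) * (θ / g) ^ 2) := by
            rw [mul_comm (exp _), mul_assoc, ← exp_add]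
            push_cast
            ring_nf
        _ < exp (-(θ / 2)) := hpot
    obtain ⟨p, hp⟩ := ih (μ - 1) (fun j => (R j).erase (q j)) (fun i => χ i.succ)
      (fun j => by rw [card_erase_of_mem (hqR j), hR]) (by omega) hpot''
    exact ⟨Fin.cons q p, hp.cons hqR hqadj⟩

/-- `θ = β g ^ 2 / (2 m)` makes the drift `s (θ / g) ^ 2 ≤ θ β / 2` eat only half of the initial
slack `θ β` of the degrees. -/
theorem exists_paths_of_le_card {m s g : ℕ} {β : ℝ} {R : Fin (k + 1) → Finset V}
    (hR : ∀ j, #(R j) = m) (hsg : s + g ≤ m) (hg : 0 < g) (hβ : 0 < β) (hβ1 : β ≤ 1)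
    (hdeg : ∀ c v j ℓ, (pathGraph (k + 1)).Adj j ℓ → v ∈ R j →
      (1 / 2 + β) * m ≤ #((G c).neighborFinset v ∩ R ℓ))
    (hcount : Fintype.card C * Fintype.card V * (k + 1) < exp (β ^ 2 * g ^ 2 / (4 * m)))
    (χ : Fin s → ℕ → C) : ∃ p, IsColouredPathPacking G R χ p := by
  have hg' : (0 : ℝ) < g := by exact_mod_cast hg
  have hgm : (g : ℝ) ≤ m := by exact_mod_cast (Nat.le_add_left g s).trans hsg
  have hsm : (s : ℝ) ≤ m := by exact_mod_cast (Nat.le_add_right s g).trans hsg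
  have hm : (0 : ℝ) < m := hg'.trans_le hgm
  set θ := β * g ^ 2 / (2 * m) with hθ
  have hθg : θ ≤ g := by
    rw [hθ, div_le_iff₀ (by positivity)]
    nlinarith [mul_le_mul hβ1 hgm hg'.le zero_le_one]
  have hdrift : s * (θ / g) ^ 2 ≤ β ^ 2 * g ^ 2 / (4 * m) :=
    calc s * (θ / g) ^ 2 ≤ m * (θ / g) ^ 2 := by gcongr
      _ = β ^ 2 * g ^ 2 / (4 * m) := by rw [hθ]; field_simp; ring
  refine exists_paths_of_pathPotential_lt (by positivity) hθg s m R χ hR hsg ?_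
  calc pathPotential G θ m R * exp (s * (θ / g) ^ 2)
      ≤ Fintype.card C * Fintype.card V * (k + 1) * exp (-(θ * ((1 / 2 + β) * m) / m)) *
          exp (s * (θ / g) ^ 2) := by
        gcongr
        exact pathPotential_le (by positivity) hm hdeg
    _ ≤ Fintype.card C * Fintype.card V * (k + 1) *
          exp (-(θ / 2) - β ^ 2 * g ^ 2 / (4 * m)) := by
        rw [mul_assoc, ← exp_add]
        gcongr
        have : θ * ((1 / 2 + β) * m) / m = θ / 2 + 2 * (β ^ 2 * g ^ 2 / (4 * m)) := by
          rw [hθ]; field_simp; ring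
        linarith
    _ < exp (β ^ 2 * g ^ 2 / (4 * m)) * exp (-(θ / 2) - β ^ 2 * g ^ 2 / (4 * m)) := by gcongr
    _ = exp (-(θ / 2)) := by rw [← exp_add]; ring_nf

end PathPotential

theorem sum_card_eq_card_of_partition {ι V : Type*} [Fintype ι] [Fintype V] [DecidableEq V]
    {W : ι → Finset V} (hdisj : ∀ j j', j ≠ j' → Disjoint (W j) (W j'))
    (hcover : ∀ v, ∃ j, v ∈ W j) : ∑ j, #(W j) = Fintype.card V := by
  rw [← card_biUnion fun j _ j' _ h => hdisj j j' h, ← card_univ]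
  congr
  exact eq_univ_of_forall fun v => mem_biUnion.2 <| (hcover v).imp fun j hj => ⟨mem_univ j, hj⟩

theorem exists_card_bounds_of_balanced {V : Type*} [Fintype V] [DecidableEq V] {k : ℕ}
    {W : Fin (k + 1) → Finset V} (hdisj : ∀ j j', j ≠ j' → Disjoint (W j) (W j'))
    (hcover : ∀ v, ∃ j, v ∈ W j) (hbal : ∀ j j', #(W j) ≤ #(W j') + 1) :
    ∃ m : ℕ, (∀ j, m ≤ #(W j) ∧ #(W j) ≤ m + 1) ∧
      (m : ℝ) ≤ Fintype.card V / (k + 1) ∧ (Fintype.card V : ℝ) / (k + 1) ≤ m + 1 := by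
  obtain ⟨j₀, hj₀⟩ := Finite.exists_min fun j => #(W j)
  have hbounds : ∀ j, #(W j₀) ≤ #(W j) ∧ #(W j) ≤ #(W j₀) + 1 := fun j => ⟨hj₀ j, hbal j j₀⟩
  have hsum := sum_card_eq_card_of_partition hdisj hcover
  have hlow : (k + 1) * #(W j₀) ≤ Fintype.card V := by
    simpa [← hsum] using sum_le_sum fun j (_ : j ∈ univ) => (hbounds j).1
  have hupp : Fintype.card V ≤ (k + 1) * (#(W j₀) + 1) := by
    simpa [← hsum] using sum_le_sum fun j (_ : j ∈ univ) => (hbounds j).2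
  refine ⟨#(W j₀), hbounds, ?_, ?_⟩
  · rw [le_div_iff₀ (by positivity)]
    exact_mod_cast (mul_comm _ _).trans_le hlow
  · rw [div_le_iff₀ (by positivity)]
    exact_mod_cast hupp.trans_eq (mul_comm _ _)

theorem injective_uncurry_of_disjoint {ι κ V : Type*} {W : κ → Finset V} {p : ι → κ → V}
    (hdisj : ∀ j j', j ≠ j' → Disjoint (W j) (W j')) (hpW : ∀ i j, p i j ∈ W j)
    (hp : ∀ j, Function.Injective (p · j)) :
    Function.Injective fun q : ι × κ => p q.1 q.2 := by
  rintro ⟨i, j⟩ ⟨i', j'⟩ (h : p i j = p i' j')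
  obtain rfl : j = j' := by
    by_contra hjj'
    exact Finset.disjoint_left.1 (hdisj j j' hjj') (hpW i j) (h ▸ hpW i' j')
  rw [hp j h]

theorem exists_subset_card_eq_card_inter_le_succ {V : Type*} [DecidableEq V] {m : ℕ}
    {W : Finset V} (hm : m ≤ #W) (hW : #W ≤ m + 1) :
    ∃ W' ⊆ W, #W' = m ∧ ∀ A : Finset V, #(A ∩ W) ≤ #(A ∩ W') + 1 := by
  obtain ⟨W', hW'W, hW'⟩ := exists_subset_card_eq hm
  refine ⟨W', hW'W, hW', fun A => ?_⟩
  have hsd : (A ∩ W) \ (A ∩ W') ⊆ W \ W' := fun v hv => by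
    simp only [Finset.mem_sdiff, Finset.mem_inter] at hv ⊢
    tauto
  have := card_le_card hsd
  rw [card_sdiff_of_subset hW'W] at this
  have := card_le_card_sdiff_add_card (s := A ∩ W) (t := A ∩ W')
  omega

section Partition

variable {C V : Type*} [Fintype C] [Fintype V] [DecidableEq V] {G : C → SimpleGraph V}
  [∀ c, DecidableRel (G c).Adj] {k : ℕ}

theorem exists_paths_of_card_le_succ {m s g : ℕ} {α : ℝ} {W : Fin (k + 1) → Finset V}
    (hW : ∀ j, m ≤ #(W j) ∧ #(W j) ≤ m + 1) (hsg : s + g ≤ m) (hg : 0 < g) (hα : 0 < α)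
    (hα1 : α ≤ 1) (hαm : 2 ≤ α * m)
    (hdeg : ∀ c v j ℓ, (pathGraph (k + 1)).Adj j ℓ → v ∈ W j →
      (1 / 2 + α) * m ≤ #((G c).neighborFinset v ∩ W ℓ))
    (hcount : Fintype.card C * Fintype.card V * (k + 1) < exp (α ^ 2 * g ^ 2 / (16 * m)))
    (χ : Fin s → ℕ → C) : ∃ p, IsColouredPathPacking G W χ p := by
  choose W' hW'W hW' hinter using fun j =>
    exists_subset_card_eq_card_inter_le_succ (hW j).1 (hW j).2
  obtain ⟨p, hp⟩ := exists_paths_of_le_card (G := G) (R := W') (β := α / 2) hW' hsg hg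
    (by positivity) (by linarith)
    (fun c v j ℓ hjℓ hv => by
      have h1 := hdeg c v j ℓ hjℓ (hW'W j hv)
      have h2 : (#((G c).neighborFinset v ∩ W ℓ) : ℝ) ≤ #((G c).neighborFinset v ∩ W' ℓ) + 1 := by
        exact_mod_cast hinter ℓ _
      linarith)
    (by convert hcount using 2; field_simp; ring) χ
  exact ⟨p, hp.mono hW'W⟩

theorem exists_paths_of_balanced {α ε : ℝ} {s : ℕ} {W : Fin (k + 1) → Finset V}
    (hα : 0 < α) (hα1 : α ≤ 1) (hε : 0 < ε)
    (hdisj : ∀ j j', j ≠ j' → Disjoint (W j) (W j')) (hcover : ∀ v, ∃ j, v ∈ W j)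
    (hbal : ∀ j j', #(W j) ≤ #(W j') + 1)
    (hdeg : ∀ c v j ℓ, (pathGraph (k + 1)).Adj j ℓ → v ∈ W j →
      (1 / 2 + α) * Fintype.card V / (k + 1) ≤ #((G c).neighborFinset v ∩ W ℓ))
    (hs : (s : ℝ) ≤ (1 - ε) * Fintype.card V / (k + 1))
    (hlarge : 2 / α + 2 / ε ≤ Fintype.card V / (k + 1) - 1)
    (hcount : Fintype.card C * Fintype.card V * (k + 1) <
      exp (α ^ 2 * ε ^ 2 * (Fintype.card V / (k + 1) - 1) / 64))
    (χ : Fin s → ℕ → C) :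
    ∃ p, Function.Injective (fun q : Fin s × Fin (k + 1) => p q.1 q.2) ∧
      IsColouredPathPacking G W χ p := by
  obtain ⟨m, hW, hmn, hnm⟩ := exists_card_bounds_of_balanced hdisj hcover hbal
  set avg : ℝ := Fintype.card V / (k + 1) with havg
  have hαm : 2 ≤ α * m := by
    have := (div_le_iff₀' hα).1 ((le_add_of_nonneg_right (by positivity)).trans hlarge)
    nlinarith
  have hεm : 2 ≤ ε * m := by
    have := (div_le_iff₀' hε).1 ((le_add_of_nonneg_left (by positivity)).trans hlarge)
    nlinarith
  have hsm : (s : ℝ) ≤ m - ε * m / 2 := by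
    have : (1 - ε) * Fintype.card V / (k + 1) = (1 - ε) * avg := by rw [havg]; ring
    nlinarith
  have hsm' : s ≤ m := by exact_mod_cast (hsm.trans (by linarith) : (s : ℝ) ≤ m)
  have hg : ε * m / 2 ≤ ((m - s : ℕ) : ℝ) := by
    rw [Nat.cast_sub hsm']
    linarith
  have hexp : α ^ 2 * ε ^ 2 * (avg - 1) / 64 ≤ α ^ 2 * ((m - s : ℕ) : ℝ) ^ 2 / (16 * m) := by
    have hm : (0 : ℝ) < m := by linarith
    calc α ^ 2 * ε ^ 2 * (avg - 1) / 64 ≤ α ^ 2 * (ε * m / 2) ^ 2 / (16 * m) := by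
          rw [div_le_div_iff₀ (by norm_num) (by positivity)]
          have : avg - 1 ≤ m := by linarith
          nlinarith [mul_le_mul_of_nonneg_left this (by positivity : 0 ≤ α ^ 2 * ε ^ 2 * (16 * m))]
      _ ≤ α ^ 2 * ((m - s : ℕ) : ℝ) ^ 2 / (16 * m) := by gcongr
  obtain ⟨p, hp⟩ := exists_paths_of_card_le_succ hW (Nat.add_sub_cancel' hsm').le
    (Nat.cast_pos.1 (by linarith : (0 : ℝ) < (m - s : ℕ))) hα hα1 hαm
    (fun c v j ℓ hjℓ hv => (by gcongr : (1 / 2 + α) * m ≤ (1 / 2 + α) * avg).trans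
      (by simpa only [havg, mul_div_assoc] using hdeg c v j ℓ hjℓ hv))
    (hcount.trans_le (exp_le_exp.2 hexp)) χ
  exact ⟨p, injective_uncurry_of_disjoint hdisj hp.mem hp.injective, hp⟩

end Partition

theorem le_card_inter_of_le_ncard {C V : Type*} [Fintype V] [DecidableEq V]
    {G : C → SimpleGraph V} [∀ c, DecidableRel (G c).Adj] {k : ℕ} {W : Fin (k + 1) → Finset V}
    {d : ℝ} (h : ∀ (c : C) (j : ℕ) (hj : j + 1 < k + 1),
      (∀ v ∈ W ⟨j, by omega⟩, d ≤ (((G c).neighborSet v) ∩ ↑(W ⟨j + 1, hj⟩)).ncard) ∧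
      (∀ v ∈ W ⟨j + 1, hj⟩, d ≤ (((G c).neighborSet v) ∩ ↑(W ⟨j, by omega⟩)).ncard))
    (c : C) (v : V) (j ℓ : Fin (k + 1)) (hjℓ : (pathGraph (k + 1)).Adj j ℓ) (hv : v ∈ W j) :
    d ≤ #((G c).neighborFinset v ∩ W ℓ) := by
  rw [← Set.ncard_coe_finset, coe_inter, coe_neighborFinset]
  obtain ⟨j, hj⟩ := j
  obtain ⟨ℓ, hℓ⟩ := ℓ
  rcases pathGraph_adj.1 hjℓ with rfl | rfl
  · exact (h c j hℓ).1 v hv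
  · exact (h c ℓ hj).2 v hv

theorem eventually_mul_self_mul_lt_exp {c K : ℝ} (hc : 0 < c) (hK : 0 < K) :
    ∀ᶠ x : ℝ in atTop, x * x * K < exp (c * (x / K - 1)) := by
  filter_upwards [(isLittleO_pow_exp_pos_mul_atTop 2 (div_pos hc hK)).def
    (by positivity : 0 < 1 / (2 * K * exp c))] with x hx
  rw [norm_pow, Real.norm_eq_abs, sq_abs, Real.norm_eq_abs, abs_exp] at hx
  have : exp (c * (x / K - 1)) = exp (c / K * x) / exp c := by
    rw [← exp_sub]; ring_nf
  rw [this, lt_div_iff₀ (exp_pos c)]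
  have := exp_pos (c / K * x)
  calc x * x * K * exp c = K * exp c * x ^ 2 := by ring
    _ ≤ K * exp c * (1 / (2 * K * exp c) * exp (c / K * x)) := by gcongr
    _ < exp (c / K * x) := by field_simp; linarith

/-- Lemma 3.2 (path collection): with `0 < 1/n ≪ ε, 1/K ≪ α ≤ 1`, given `n` graphs on
`{1,…,n}`, all `K`-partite with respect to a common balanced partition `V₁,…,V_K`,
such that all degrees between consecutive parts are at least `(1/2+α)n/K`, and given
`s ≤ (1−ε)n/K` colour patterns `χ_i`, there are pairwise vertex-disjoint paths
`P₁,…,P_s`, each with one vertex in each part `V₁,…,V_K` in order, such that the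
`j`-th edge of `P_i` lies in the graph of colour `χ_i(j)`. -/
theorem stmt_12 (α : ℝ) (hα : 0 < α) (hα1 : α ≤ 1) :
    ∃ δ : ℝ, 0 < δ ∧ ∀ (ε : ℝ) (K : ℕ), 0 < ε → ε ≤ δ → (1 : ℝ) / δ ≤ K →
    ∃ n₀ : ℕ, ∀ n : ℕ, n₀ ≤ n →
    ∀ (G : Fin n → SimpleGraph (Fin n)) (W : Fin K → Finset (Fin n)),
    -- V₁,…,V_K is a balanced partition of the vertex set
    (∀ j j' : Fin K, j ≠ j' → Disjoint (W j) (W j')) →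
    (∀ v : Fin n, ∃ j : Fin K, v ∈ W j) →
    (∀ j j' : Fin K, (W j).card ≤ (W j').card + 1) →
    -- every graph is K-partite with respect to the partition
    (∀ (i : Fin n) (u v : Fin n) (j : Fin K), (G i).Adj u v → u ∈ W j → v ∉ W j) →
    -- degree condition between consecutive parts
    (∀ (i : Fin n) (j : ℕ) (hj : j + 1 < K),
      (∀ v ∈ W ⟨j, by omega⟩,
        (1/2 + α) * n / K ≤ (((G i).neighborSet v) ∩ ↑(W ⟨j+1, hj⟩)).ncard) ∧
      (∀ v ∈ W ⟨j+1, hj⟩,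
        (1/2 + α) * n / K ≤ (((G i).neighborSet v) ∩ ↑(W ⟨j, by omega⟩)).ncard)) →
    ∀ (s : ℕ) (χ : Fin s → ℕ → Fin n), (s : ℝ) ≤ (1 - ε) * n / K →
    ∃ p : Fin s → Fin K → Fin n,
      Function.Injective (fun q : Fin s × Fin K => p q.1 q.2) ∧
      (∀ (i : Fin s) (j : Fin K), p i j ∈ W j) ∧
      (∀ (i : Fin s) (j : ℕ) (hj : j + 1 < K),
        (G (χ i (j+1))).Adj (p i ⟨j, by omega⟩) (p i ⟨j+1, hj⟩)) := by
  classical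
  refine ⟨1, one_pos, fun ε K hε _ hK => ?_⟩
  obtain ⟨k, rfl⟩ : ∃ k, K = k + 1 :=
    Nat.exists_eq_add_one.2 (Nat.one_le_cast.1 (by simpa using hK : (1 : ℝ) ≤ K))
  obtain ⟨n₀, hn₀⟩ := eventually_atTop.1 <| tendsto_natCast_atTop_atTop.eventually <|
    (eventually_ge_atTop ((k + 1) * (2 / α + 2 / ε + 1))).and
      (eventually_mul_self_mul_lt_exp (by positivity : 0 < α ^ 2 * ε ^ 2 / 64)
        (by positivity : (0 : ℝ) < k + 1))
  refine ⟨n₀, fun n hn G W hdisj hcover hbal _ hdeg s χ hs => ?_⟩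
  obtain ⟨hlarge, hcount⟩ := hn₀ n hn
  obtain ⟨p, hinj, hp⟩ := exists_paths_of_balanced (G := G) hα hα1 hε
    hdisj hcover hbal (le_card_inter_of_le_ncard (by simpa using hdeg)) (by simpa using hs)
    (by simp only [Fintype.card_fin]; rw [le_sub_iff_add_le, le_div_iff₀ (by positivity)]; linarith)
    (by simp only [Fintype.card_fin]; convert hcount using 2; ring) χ
  exact ⟨p, hinj, hp.mem, fun i j hj => hp.adj i ⟨j, by omega⟩⟩
end
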